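/- arXiv:math/0206239 — 7 statements merged into one kernel-verified Lean document; each statement's English description precedes it below -/
import Mathlib

section
/- Let p > 0, γ > 0 and ρ be real, and let s ∈ ℂ satisfy Re(s) > 0 and ρ + γ·Re(s) > 0. Then the Mellin transform at s of the function z ↦ ∫₀^∞ t^{ρ−1} e^{−p t − z t^{−γ}} dt (defined for z > 0) equals Γ(s) · Γ(ρ + γ s) · p^{−(ρ + γ s)}. -/
/-!
Write the integrand as `g t * exp (-(z * b t))` with `g t = t ^ (ρ - 1) * exp (-(p * t))` and
`b t = t ^ (-γ)`. The Mellin transform in `z` of `exp (-(z * b))` is `Γ(s) * b ^ (-s)`, and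
the double integral converges absolutely (its modulus is the same computation at `Re s`), so
Fubini moves the Mellin transform inside the `t`-integral. Since `b t ^ (-s) = t ^ (γ * s)`,
what remains is the Gamma integral
`∫ t ^ (ρ + γ * s - 1) * exp (-(p * t)) dt = Γ(ρ + γ * s) * p ^ (-(ρ + γ * s))`.
-/

open MeasureTheory Set

lemma integrableOn_rpow_sub_one_mul_exp_neg_mul {a r : ℝ} (ha : 0 < a) (hr : 0 < r) :
    IntegrableOn (fun z : ℝ => z ^ (a - 1) * Real.exp (-(r * z))) (Ioi 0) := by
  simpa [Real.rpow_one, neg_mul] using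
    integrableOn_rpow_mul_exp_neg_mul_rpow (s := a - 1) (by linarith) one_pos hr

lemma integrableOn_cpow_sub_one_mul_exp_neg_mul {a : ℂ} {r : ℝ} (ha : 0 < a.re) (hr : 0 < r) :
    IntegrableOn (fun z : ℝ => (z : ℂ) ^ (a - 1) * Complex.exp (-(r * z))) (Ioi 0) := by
  refine (integrableOn_rpow_sub_one_mul_exp_neg_mul ha hr).mono' (by fun_prop) ?_
  filter_upwards [ae_restrict_mem measurableSet_Ioi] with z hz
  rw [norm_mul, Complex.norm_cpow_eq_rpow_re_of_pos hz, ← Complex.ofReal_mul,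
    ← Complex.ofReal_neg, Complex.norm_exp_ofReal]
  simp

lemma integral_rpow_sub_one_mul_exp_neg_mul_Ioi {a r : ℝ} (ha : 0 < a) (hr : 0 < r) :
    ∫ z in Ioi (0 : ℝ), z ^ (a - 1) * Real.exp (-(r * z)) = Real.Gamma a * r ^ (-a) := by
  rw [Real.integral_rpow_mul_exp_neg_mul_Ioi ha hr, one_div, Real.inv_rpow hr.le,
    Real.rpow_neg hr.le, mul_comm]

lemma integral_cpow_sub_one_mul_exp_neg_mul_Ioi {a : ℂ} {r : ℝ} (ha : 0 < a.re) (hr : 0 < r) :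
    ∫ z in Ioi (0 : ℝ), (z : ℂ) ^ (a - 1) * Complex.exp (-(r * z))
      = Complex.Gamma a * (r : ℂ) ^ (-a) := by
  rw [Complex.integral_cpow_mul_exp_neg_mul_Ioi ha hr, one_div,
    Complex.inv_cpow_ofReal_nonneg hr.le, Complex.cpow_neg, mul_comm]

theorem mellin_integral_mul_exp_neg_mul {α : Type*} [MeasurableSpace α] {μ : Measure α}
    [SFinite μ] {g b : α → ℝ} {s : ℂ} (hs : 0 < s.re) (hg : Measurable g) (hb : Measurable b)
    (hb_pos : ∀ᵐ t ∂μ, 0 < b t) (hint : Integrable (fun t => |g t| * b t ^ (-s.re)) μ) :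
    mellin (fun z : ℝ => ((∫ t, g t * Real.exp (-(z * b t)) ∂μ : ℝ) : ℂ)) s
      = Complex.Gamma s * ∫ t, (g t : ℂ) * (b t : ℂ) ^ (-s) ∂μ := by
  set F : ℝ → α → ℂ := fun z t => (z : ℂ) ^ (s - 1) * ((g t * Real.exp (-(z * b t)) : ℝ) : ℂ)
  have hF_eq : ∀ z t, F z t = g t * ((z : ℂ) ^ (s - 1) * Complex.exp (-(b t * z))) := by
    intro z t
    simp only [F]
    push_cast
    ring_nf
  have hF_norm : ∀ z > (0 : ℝ), ∀ t,
      ‖F z t‖ = |g t| * (z ^ (s.re - 1) * Real.exp (-(b t * z))) := by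
    intro z hz t
    rw [hF_eq, norm_mul, norm_mul, Complex.norm_cpow_eq_rpow_re_of_pos hz, ← Complex.ofReal_mul,
      ← Complex.ofReal_neg, Complex.norm_exp_ofReal, Complex.norm_real, Real.norm_eq_abs]
    simp
  have hF_int : Integrable (Function.uncurry F) ((volume.restrict (Ioi 0)).prod μ) := by
    rw [integrable_prod_iff' (by simp only [F]; fun_prop)]
    constructor
    · filter_upwards [hb_pos] with t ht
      simp only [Function.uncurry_apply_pair, hF_eq]
      exact (integrableOn_cpow_sub_one_mul_exp_neg_mul hs ht).const_mul _
    · refine (hint.const_mul (Real.Gamma s.re)).congr ?_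
      filter_upwards [hb_pos] with t ht
      simp only [Function.uncurry_apply_pair]
      rw [setIntegral_congr_fun measurableSet_Ioi (fun z hz => hF_norm z hz t), integral_const_mul,
        integral_rpow_sub_one_mul_exp_neg_mul_Ioi hs ht]
      ring
  calc mellin (fun z : ℝ => ((∫ t, g t * Real.exp (-(z * b t)) ∂μ : ℝ) : ℂ)) s
      = ∫ z in Ioi (0 : ℝ), ∫ t, F z t ∂μ := by
        refine setIntegral_congr_fun measurableSet_Ioi (fun z _ => ?_)
        dsimp only
        rw [smul_eq_mul, ← integral_complex_ofReal, ← integral_const_mul]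
    _ = ∫ t, (∫ z in Ioi (0 : ℝ), F z t) ∂μ := integral_integral_swap hF_int
    _ = ∫ t, Complex.Gamma s * ((g t : ℂ) * (b t : ℂ) ^ (-s)) ∂μ := by
        refine integral_congr_ae ?_
        filter_upwards [hb_pos] with t ht
        simp_rw [hF_eq]
        rw [integral_const_mul, integral_cpow_sub_one_mul_exp_neg_mul_Ioi hs ht]
        ring
    _ = Complex.Gamma s * ∫ t, (g t : ℂ) * (b t : ℂ) ^ (-s) ∂μ := integral_const_mul _ _

lemma rpow_sub_one_mul_rpow_neg_rpow_neg {t : ℝ} (ht : 0 < t) (ρ γ x : ℝ) :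
    t ^ (ρ - 1) * (t ^ (-γ)) ^ (-x) = t ^ (ρ + γ * x - 1) := by
  rw [← Real.rpow_mul ht.le, ← Real.rpow_add ht]
  ring_nf

lemma ofReal_rpow_sub_one_mul_ofReal_rpow_neg_cpow_neg {t : ℝ} (ht : 0 < t) (ρ γ : ℝ) (s : ℂ) :
    ((t ^ (ρ - 1) : ℝ) : ℂ) * ((t ^ (-γ) : ℝ) : ℂ) ^ (-s) = (t : ℂ) ^ ((ρ : ℂ) + γ * s - 1) := by
  rw [← Complex.cpow_mul_ofReal_nonneg ht.le, Complex.ofReal_cpow ht.le,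
    ← Complex.cpow_add _ _ (Complex.ofReal_ne_zero.mpr ht.ne')]
  push_cast
  ring_nf

theorem stmt2_general (p γ ρ : ℝ) (hp : 0 < p) (s : ℂ)
    (hs : 0 < s.re) (hρs : 0 < ρ + γ * s.re) :
    mellin (fun z : ℝ =>
        ((∫ t in Set.Ioi (0:ℝ), t ^ (ρ - 1) * Real.exp (-p * t - z * t ^ (-γ)) : ℝ) : ℂ)) s
      = Complex.Gamma s * Complex.Gamma ((ρ : ℂ) + (γ : ℂ) * s) *
          (p : ℂ) ^ (-((ρ : ℂ) + (γ : ℂ) * s)) := by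
  have hsplit : ∀ z t : ℝ, t ^ (ρ - 1) * Real.exp (-p * t - z * t ^ (-γ))
      = t ^ (ρ - 1) * Real.exp (-(p * t)) * Real.exp (-(z * t ^ (-γ))) := by
    intro z t
    rw [mul_assoc, ← Real.exp_add]
    ring_nf
  have hb_pos : ∀ᵐ t ∂(volume.restrict (Ioi (0 : ℝ))), 0 < t ^ (-γ) :=
    ae_restrict_of_forall_mem measurableSet_Ioi fun t ht => Real.rpow_pos_of_pos ht _
  have hint : IntegrableOn
      (fun t : ℝ => |t ^ (ρ - 1) * Real.exp (-(p * t))| * (t ^ (-γ)) ^ (-s.re)) (Ioi 0) := by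
    refine (integrableOn_rpow_sub_one_mul_exp_neg_mul hρs hp).congr_fun (fun t ht => ?_)
      measurableSet_Ioi
    rw [abs_of_pos (mul_pos (Real.rpow_pos_of_pos ht _) (Real.exp_pos _)), mul_right_comm,
      rpow_sub_one_mul_rpow_neg_rpow_neg ht]
  have hres : 0 < ((ρ : ℂ) + γ * s).re := by simpa using hρs
  simp_rw [hsplit]
  rw [mellin_integral_mul_exp_neg_mul hs (by fun_prop) (by fun_prop) hb_pos hint,
    setIntegral_congr_fun measurableSet_Ioi (fun t ht => ?_),
    integral_cpow_sub_one_mul_exp_neg_mul_Ioi hres hp, mul_assoc]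
  push_cast
  rw [mul_right_comm, ofReal_rpow_sub_one_mul_ofReal_rpow_neg_cpow_neg ht]

theorem stmt2 (p γ ρ : ℝ) (hp : 0 < p) (hγ : 0 < γ) (s : ℂ)
    (hs : 0 < s.re) (hρs : 0 < ρ + γ * s.re) :
    mellin (fun z : ℝ =>
        ((∫ t in Set.Ioi (0:ℝ), t ^ (ρ - 1) * Real.exp (-p * t - z * t ^ (-γ)) : ℝ) : ℂ)) s
      = Complex.Gamma s * Complex.Gamma ((ρ : ℂ) + (γ : ℂ) * s) *
          (p : ℂ) ^ (-((ρ : ℂ) + (γ : ℂ) * s)) :=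
  stmt2_general p γ ρ hp s hs hρs
end

section
/- Let a > 0, b > 0, z > 0, γ > 0, let 0 < δ < 1, and let ρ be real. Then the depleted non-resonant reaction rate integral admits the absolutely convergent expansion ∫₀^∞ t^ρ e^{−a t − b t^δ − z t^{−γ}} dt = Σ_{k=0}^∞ [(−b)^k / k!] ∫₀^∞ t^{ρ + kδ} e^{−a t − z t^{−γ}} dt. -/
/-!
Expanding `exp (c * h)` in its power series under an integral against `g` is legitimate as soon
as `exp (|c| * |h|) * g` is integrable: that function is the sum of the absolute values of the
terms, so dominated convergence applies. Here `h t = t ^ δ` and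
`g t = t ^ ρ * exp (-a t - z t^(-γ))`. Since `δ < 1`, `|c| t ^ δ ≤ C + (a / 2) t`, so
`exp (|c| t ^ δ) * g` is bounded by a multiple of `t ^ ρ * exp (-(a / 2) t - z t^(-γ))`, which is
integrable on `(0, ∞)`: `exp (-z t^(-γ))` kills every power of `t` near `0` and
`exp (-(a / 4) t)` every power near `∞`. Taking `c = -b` gives the expansion; taking `c = |b|`
gives its absolute convergence, because all the moments are nonnegative.
-/

open MeasureTheory Set Real
open scoped Nat

theorem hasSum_pow_div_factorial_mul_pow_mul (c y w : ℝ) :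
    HasSum (fun k : ℕ => c ^ k / k ! * (y ^ k * w)) (exp (c * y) * w) := by
  have hexp : HasSum (fun k : ℕ => (c * y) ^ k / k !) (exp (c * y)) := by
    rw [exp_eq_exp_ℝ]
    exact NormedSpace.expSeries_div_hasSum_exp _
  have hterm : (fun k : ℕ => c ^ k / k ! * (y ^ k * w)) = fun k => (c * y) ^ k / k ! * w := by
    funext k
    ring
  exact hterm ▸ hexp.mul_right w

theorem hasSum_integral_exp_mul_of_integrable {α : Type*} [MeasurableSpace α] {μ : Measure α}
    {g h : α → ℝ} (c : ℝ) (hh : AEStronglyMeasurable h μ) (hg : AEStronglyMeasurable g μ)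
    (hint : Integrable (fun x => exp (|c| * |h x|) * g x) μ) :
    HasSum (fun k : ℕ => c ^ k / k ! * ∫ x, h x ^ k * g x ∂μ)
      (∫ x, exp (c * h x) * g x ∂μ) := by
  have hnorm : ∀ (k : ℕ) x,
      ‖c ^ k / k ! * (h x ^ k * g x)‖ = |c| ^ k / k ! * (|h x| ^ k * |g x|) :=
    fun k x => by simp
  simp_rw [← integral_const_mul]
  refine hasSum_integral_of_dominated_convergence (fun k x => ‖c ^ k / k ! * (h x ^ k * g x)‖)
    (fun k => ((hh.pow k).mul hg).const_mul _) (fun k => ae_of_all _ fun x => le_rfl)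
    (ae_of_all _ fun x => ?_) ?_
    (ae_of_all _ fun x => hasSum_pow_div_factorial_mul_pow_mul c (h x) (g x))
  · simp_rw [hnorm]
    exact (hasSum_pow_div_factorial_mul_pow_mul |c| |h x| |g x|).summable
  · convert hint.norm using 2 with x
    simp_rw [hnorm, (hasSum_pow_div_factorial_mul_pow_mul |c| |h x| |g x|).tsum_eq, norm_mul,
      norm_of_nonneg (exp_pos _).le, norm_eq_abs]

theorem exists_rpow_le_add_mul {δ ε : ℝ} (hδ₀ : 0 ≤ δ) (hδ₁ : δ < 1) (hε : 0 < ε) :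
    ∃ C, ∀ t, 0 ≤ t → t ^ δ ≤ C + ε * t := by
  -- beyond `T` the slope `t ^ (δ - 1)` is at most `ε`
  set T := ε ^ (δ - 1)⁻¹
  have hT : 0 < T := rpow_pos_of_pos hε _
  refine ⟨T ^ δ, fun t ht => ?_⟩
  rcases le_total t T with htT | hTt
  · nlinarith [rpow_le_rpow ht htT hδ₀, mul_nonneg hε.le ht]
  · have ht₀ : 0 < t := hT.trans_le hTt
    have hslope : t ^ (δ - 1) ≤ ε :=
      calc t ^ (δ - 1) ≤ T ^ (δ - 1) := rpow_le_rpow_of_nonpos hT hTt (by linarith)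
        _ = ε := rpow_inv_rpow hε.le (by linarith)
    have hsplit : t ^ δ = t ^ (δ - 1) * t := by
      rw [rpow_sub_one ht₀.ne', div_mul_cancel₀ _ ht₀.ne']
    nlinarith [rpow_nonneg hT.le δ]

theorem rpow_mul_exp_neg_le_factorial {p x : ℝ} (hp : 0 ≤ p) (hx : 0 ≤ x) :
    x ^ p * exp (-x) ≤ ⌈p⌉₊ ! := by
  rcases le_total x 1 with hx₁ | hx₁
  · calc x ^ p * exp (-x) ≤ 1 :=
          mul_le_one₀ (rpow_le_one hx hx₁ hp) (exp_pos _).le (exp_le_one_iff.2 (by linarith))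
      _ ≤ _ := by exact_mod_cast Nat.one_le_iff_ne_zero.2 (Nat.factorial_ne_zero _)
  · calc x ^ p * exp (-x) ≤ x ^ (⌈p⌉₊ : ℝ) * exp (-x) := by
          gcongr
          exact Nat.le_ceil p
      _ ≤ _ := by
        rw [rpow_natCast, exp_neg, ← div_eq_mul_inv, div_le_iff₀ (exp_pos _),
          ← div_le_iff₀' (by positivity)]
        exact pow_div_factorial_le_exp x hx _

theorem exists_rpow_mul_exp_neg_mul_le {p c : ℝ} (hp : 0 ≤ p) (hc : 0 < c) :
    ∃ C, ∀ x, 0 ≤ x → x ^ p * exp (-c * x) ≤ C := by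
  refine ⟨⌈p⌉₊ ! / c ^ p, fun x hx => ?_⟩
  have hcp : 0 < c ^ p := rpow_pos_of_pos hc p
  rw [le_div_iff₀ hcp, mul_right_comm, ← mul_rpow hx hc.le, mul_comm x, neg_mul]
  exact rpow_mul_exp_neg_le_factorial hp (by positivity)

theorem rpow_le_rpow_abs_add_rpow_neg_abs {t : ℝ} (ht : 0 < t) (s : ℝ) :
    t ^ s ≤ t ^ |s| + t ^ (-|s|) := by
  rcases le_total t 1 with ht₁ | ht₁
  · have := rpow_le_rpow_of_exponent_ge ht ht₁ (neg_abs_le s)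
    linarith [rpow_nonneg ht.le |s|]
  · have := rpow_le_rpow_of_exponent_le ht₁ (le_abs_self s)
    linarith [rpow_nonneg ht.le (-|s|)]

theorem exists_rpow_mul_exp_neg_le_mul_exp {c z γ : ℝ} (hc : 0 < c) (hz : 0 < z) (hγ : 0 < γ)
    (s : ℝ) :
    ∃ M, ∀ t, 0 < t → t ^ s * exp (-c * t - z * t ^ (-γ)) ≤ M * exp (-(c / 2) * t) := by
  obtain ⟨C₁, hC₁⟩ := exists_rpow_mul_exp_neg_mul_le (abs_nonneg s) (half_pos hc)
  obtain ⟨C₂, hC₂⟩ := exists_rpow_mul_exp_neg_mul_le (div_nonneg (abs_nonneg s) hγ.le) hz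
  refine ⟨C₁ + C₂, fun t ht => ?_⟩
  have hzt : 0 ≤ z * t ^ (-γ) := by positivity
  have hct : 0 ≤ c * t := by positivity
  have h₁ : t ^ |s| * exp (-c * t - z * t ^ (-γ)) ≤ C₁ * exp (-(c / 2) * t) :=
    calc _ ≤ t ^ |s| * exp (-(c / 2) * t) * exp (-(c / 2) * t) := by
          rw [mul_assoc, ← exp_add]; gcongr; linarith
      _ ≤ _ := by gcongr; exact hC₁ t ht.le
  have h₂ : t ^ (-|s|) * exp (-c * t - z * t ^ (-γ)) ≤ C₂ * exp (-(c / 2) * t) := by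
    have hpow : (t ^ (-γ)) ^ (|s| / γ) = t ^ (-|s|) := by
      rw [← rpow_mul ht.le]; congr 1; field_simp
    calc _ ≤ (t ^ (-γ)) ^ (|s| / γ) * exp (-z * t ^ (-γ)) * exp (-(c / 2) * t) := by
          rw [hpow, mul_assoc, ← exp_add]; gcongr; linarith
      _ ≤ _ := by gcongr; exact hC₂ _ (by positivity)
  calc t ^ s * exp (-c * t - z * t ^ (-γ))
      ≤ (t ^ |s| + t ^ (-|s|)) * exp (-c * t - z * t ^ (-γ)) := by
        gcongr; exact rpow_le_rpow_abs_add_rpow_neg_abs ht s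
    _ ≤ _ := by rw [add_mul, add_mul]; exact add_le_add h₁ h₂

theorem integrableOn_rpow_mul_exp_neg_mul_sub_mul_rpow_neg {c z γ : ℝ} (hc : 0 < c) (hz : 0 < z)
    (hγ : 0 < γ) (s : ℝ) :
    IntegrableOn (fun t => t ^ s * exp (-c * t - z * t ^ (-γ))) (Ioi 0) := by
  obtain ⟨M, hM⟩ := exists_rpow_mul_exp_neg_le_mul_exp hc hz hγ s
  refine Integrable.mono' ((exp_neg_integrableOn_Ioi 0 (half_pos hc)).const_mul M)
    (by fun_prop) ?_
  filter_upwards [ae_restrict_mem measurableSet_Ioi] with t (ht : 0 < t)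
  rw [norm_of_nonneg (by positivity)]
  exact hM t ht

theorem integrableOn_exp_mul_rpow_mul_rpow_mul_exp {a z γ δ : ℝ} (ρ B : ℝ) (ha : 0 < a)
    (hz : 0 < z) (hγ : 0 < γ) (hδ₀ : 0 ≤ δ) (hδ₁ : δ < 1) :
    IntegrableOn (fun t => exp (B * t ^ δ) * (t ^ ρ * exp (-a * t - z * t ^ (-γ)))) (Ioi 0) := by
  set ε := a / 2 / (|B| + 1)
  have hBε : |B| * ε ≤ a / 2 := by
    rw [mul_div_assoc', div_le_iff₀ (by positivity)]
    nlinarith [abs_nonneg B]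
  obtain ⟨C, hC⟩ := exists_rpow_le_add_mul hδ₀ hδ₁ (show 0 < ε by positivity)
  refine Integrable.mono'
    ((integrableOn_rpow_mul_exp_neg_mul_sub_mul_rpow_neg (half_pos ha) hz hγ ρ).const_mul
      (exp (|B| * C))) (by fun_prop) ?_
  filter_upwards [ae_restrict_mem measurableSet_Ioi] with t (ht : 0 < t)
  have hsub : B * t ^ δ ≤ |B| * C + a / 2 * t := by
    nlinarith [mul_le_mul_of_nonneg_right (le_abs_self B) (rpow_nonneg ht.le δ),
      mul_le_mul_of_nonneg_left (hC t ht.le) (abs_nonneg B),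
      mul_le_mul_of_nonneg_right hBε ht.le]
  rw [norm_of_nonneg (by positivity), mul_left_comm, ← exp_add, mul_left_comm, ← exp_add]
  gcongr _ * exp ?_
  linarith

theorem hasSum_integral_rpow_mul_exp_add_mul_rpow {a z γ δ : ℝ} (ρ c : ℝ) (ha : 0 < a)
    (hz : 0 < z) (hγ : 0 < γ) (hδ₀ : 0 ≤ δ) (hδ₁ : δ < 1) :
    HasSum (fun k : ℕ => c ^ k / k ! *
        ∫ t in Ioi 0, t ^ (ρ + k * δ) * exp (-a * t - z * t ^ (-γ)))
      (∫ t in Ioi 0, t ^ ρ * exp (-a * t + c * t ^ δ - z * t ^ (-γ))) := by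
  set g := fun t : ℝ => t ^ ρ * exp (-a * t - z * t ^ (-γ))
  have hmoment : ∀ k : ℕ, ∫ t in Ioi 0, (t ^ δ) ^ k * g t =
      ∫ t in Ioi 0, t ^ (ρ + k * δ) * exp (-a * t - z * t ^ (-γ)) := fun k =>
    setIntegral_congr_fun measurableSet_Ioi fun t (ht : 0 < t) => by
      rw [← mul_assoc, ← rpow_natCast, ← rpow_mul ht.le, ← rpow_add ht, add_comm,
        mul_comm δ]
  have hexp : ∀ t,
      exp (c * t ^ δ) * g t = t ^ ρ * exp (-a * t + c * t ^ δ - z * t ^ (-γ)) := fun t => by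
    rw [mul_left_comm, ← exp_add]
    ring_nf
  simp_rw [← hmoment, ← hexp]
  refine hasSum_integral_exp_mul_of_integrable c (by fun_prop) (by fun_prop) ?_
  refine (integrableOn_exp_mul_rpow_mul_rpow_mul_exp ρ |c| ha hz hγ hδ₀ hδ₁).congr_fun
    (fun t (ht : 0 < t) => ?_) measurableSet_Ioi
  rw [abs_of_nonneg (rpow_nonneg ht.le δ)]

theorem stmt7_general (a b z γ δ ρ : ℝ) (ha : 0 < a) (hz : 0 < z) (hγ : 0 < γ)
    (hδ₀ : 0 < δ) (hδ₁ : δ < 1) :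
    (Summable fun k : ℕ => |(-b) ^ k / (k.factorial : ℝ) *
        ∫ t in Set.Ioi (0:ℝ), t ^ (ρ + k * δ) * Real.exp (-a * t - z * t ^ (-γ))|) ∧
    ∫ t in Set.Ioi (0:ℝ), t ^ ρ * Real.exp (-a * t - b * t ^ δ - z * t ^ (-γ))
      = ∑' k : ℕ, (-b) ^ k / (k.factorial : ℝ) *
          ∫ t in Set.Ioi (0:ℝ), t ^ (ρ + k * δ) * Real.exp (-a * t - z * t ^ (-γ)) := by
  have expansion := fun c =>
    hasSum_integral_rpow_mul_exp_add_mul_rpow ρ c ha hz hγ hδ₀.le hδ₁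
  constructor
  · refine (expansion |b|).summable.congr fun k => ?_
    have hmoment : 0 ≤ ∫ t in Ioi 0, t ^ (ρ + k * δ) * exp (-a * t - z * t ^ (-γ)) :=
      setIntegral_nonneg measurableSet_Ioi fun t (ht : 0 < t) => by positivity
    rw [abs_mul, abs_of_nonneg hmoment, abs_div, abs_pow, abs_neg, Nat.abs_cast]
  · rw [(expansion (-b)).tsum_eq]
    simp only [neg_mul, ← sub_eq_add_neg]

theorem stmt7 (a b z γ δ ρ : ℝ) (ha : 0 < a) (hb : 0 < b) (hz : 0 < z) (hγ : 0 < γ)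
    (hδ₀ : 0 < δ) (hδ₁ : δ < 1) :
    (Summable fun k : ℕ => |(-b) ^ k / (k.factorial : ℝ) *
        ∫ t in Set.Ioi (0:ℝ), t ^ (ρ + k * δ) * Real.exp (-a * t - z * t ^ (-γ))|) ∧
    ∫ t in Set.Ioi (0:ℝ), t ^ ρ * Real.exp (-a * t - b * t ^ δ - z * t ^ (-γ))
      = ∑' k : ℕ, (-b) ^ k / (k.factorial : ℝ) *
          ∫ t in Set.Ioi (0:ℝ), t ^ (ρ + k * δ) * Real.exp (-a * t - z * t ^ (-γ)) :=
  stmt7_general a b z γ δ ρ ha hz hγ hδ₀ hδ₁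
end

section
/- For every fixed real ν, as z → +∞ one has the asymptotic equivalence ∫₀^∞ y^ν e^{−y − z y^{−1/2}} dy ∼ 2 (π/3)^{1/2} (z²/4)^{(2ν+1)/6} e^{−3 (z²/4)^{1/3}}. -/
/-! Write `z = 2 r³` and substitute `y = (s + r)²`, which moves the Gamow peak `y₀ = r²` to
`s = 0`. Since `-(s + r)² - 2 r³ / (s + r) = -3 r² - s² (s + 3 r) / (s + r)`, the integral becomes
`r ^ (2ν + 1) * exp (-3 r²)` times the integral over `s > -r` of `gamowKernel (2ν + 1) r s`.
As `r → ∞` the kernel tends to `2 exp (-3 s²)` pointwise and is dominated by a multiple of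
`exp (-s² / 2)`, so its integral tends to `2 √(π / 3)`. -/

open MeasureTheory Filter Asymptotics Real Topology Set

noncomputable def gamowKernel (a r s : ℝ) : ℝ :=
  2 * ((s + r) / r) ^ a * exp (-(s ^ 2 * (s + 3 * r) / (s + r)))

theorem integral_Ioi_comp_sq_add {E : Type*} [NormedAddCommGroup E] [NormedSpace ℝ E]
    (g : ℝ → E) (r : ℝ) :
    ∫ s in Ioi (-r), (2 * (s + r)) • g ((s + r) ^ 2) = ∫ y in Ioi 0, g y := by
  rw [← integral_comp_rpow_Ioi_of_pos (g := g) two_pos]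
  have hshift := (measurePreserving_add_right volume r).setIntegral_preimage_emb
    (measurableEmbedding_addRight r) (fun w : ℝ => ((2:ℝ) * w ^ ((2:ℝ) - 1)) • g (w ^ (2:ℝ)))
    (Ioi 0)
  rw [preimage_add_const_Ioi, zero_sub] at hshift
  rw [← hshift]
  refine setIntegral_congr_fun measurableSet_Ioi fun s _ => ?_
  norm_num

theorem integral_eq_mul_integral_gamowKernel (ν : ℝ) {r : ℝ} (hr : 0 < r) :
    ∫ y in Ioi 0, y ^ ν * exp (-y - 2 * r ^ 3 * y ^ (-(1:ℝ)/2))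
      = r ^ (2 * ν + 1) * exp (-3 * r ^ 2) * ∫ s in Ioi (-r), gamowKernel (2 * ν + 1) r s := by
  rw [← integral_Ioi_comp_sq_add, ← integral_const_mul]
  refine setIntegral_congr_fun measurableSet_Ioi fun s hs => ?_
  have hw : 0 < s + r := neg_lt_iff_pos_add.mp hs
  have hpow : ∀ b : ℝ, ((s + r) ^ 2) ^ b = (s + r) ^ (2 * b) := fun b => by
    rw [← rpow_natCast, ← rpow_mul hw.le, Nat.cast_ofNat]
  have hexp : -(s + r) ^ 2 - 2 * r ^ 3 * (s + r) ^ (-1 : ℝ)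
      = -3 * r ^ 2 + -(s ^ 2 * (s + 3 * r) / (s + r)) := by
    rw [rpow_neg_one]
    field_simp
    ring
  rw [smul_eq_mul, gamowKernel, hpow, hpow, show 2 * (-(1:ℝ) / 2) = -1 by norm_num, hexp,
    exp_add, div_rpow hw.le hr.le, rpow_add hw, rpow_one]
  field_simp

theorem abs_log_le_abs_sub_one_add_inv {v : ℝ} (hv : 0 < v) : |log v| ≤ |v - 1| + v⁻¹ := by
  rcases le_total 1 v with h | h
  · rw [abs_of_nonneg (log_nonneg h)]
    linarith [log_le_sub_one_of_pos hv, le_abs_self (v - 1), inv_pos.mpr hv]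
  · rw [abs_of_nonpos (log_nonpos hv.le h), ← log_inv]
    linarith [log_le_sub_one_of_pos (inv_pos.mpr hv), abs_nonneg (v - 1)]

theorem log_gamowKernel_exponent_le {a r s : ℝ} (hr : 1 ≤ r) (hra : 2 * |a| ≤ r ^ 2)
    (hs : -r < s) :
    log ((s + r) / r) * a - s ^ 2 * (s + 3 * r) / (s + r) ≤ a ^ 2 / 2 + 2 * |a| - s ^ 2 / 2 := by
  have hr0 : 0 < r := by linarith
  set v := (s + r) / r with hv_def
  have hv : 0 < v := div_pos (by linarith) hr0
  have hsv : s = (v - 1) * r := by rw [hv_def]; field_simp; ring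
  have hsplit : s ^ 2 * (s + 3 * r) / (s + r) = s ^ 2 + 2 * s ^ 2 / v := by
    have : s + r ≠ 0 := by linarith
    rw [hv_def]; field_simp; ring
  have hlog : log v * a ≤ |a| * |s| + |a| / v := by
    have hvs : |v - 1| ≤ |s| := by
      rw [hsv, abs_mul, abs_of_pos hr0]; exact le_mul_of_one_le_right (abs_nonneg _) hr
    calc log v * a ≤ |log v| * |a| := by rw [← abs_mul]; exact le_abs_self _
      _ ≤ (|s| + v⁻¹) * |a| := by
        gcongr; exact (abs_log_le_abs_sub_one_add_inv hv).trans (by linarith)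
      _ = |a| * |s| + |a| / v := by ring
  have hamgm : |a| * |s| ≤ a ^ 2 / 2 + s ^ 2 / 2 := by
    nlinarith [sq_nonneg (|a| - |s|), sq_abs a, sq_abs s]
  -- Near the lower endpoint `v → 0` the factor `exp (-2 s² / v)` beats `v ^ (-|a|)`.
  have hend : |a| / v - 2 * s ^ 2 / v ≤ 2 * |a| := by
    rw [← sub_div]
    rcases le_total (1 / 2) v with h | h
    · rw [div_le_iff₀ hv]; nlinarith [abs_nonneg a, sq_nonneg s]
    · have : r ^ 2 / 4 ≤ s ^ 2 := by
        rw [hsv, mul_pow]; nlinarith [mul_nonneg (sq_nonneg r) (sq_nonneg (v - 1 / 2))]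
      exact (div_nonpos_of_nonpos_of_nonneg (by linarith) hv.le).trans (by positivity)
  rw [hsplit]
  linarith

theorem gamowKernel_le {a r s : ℝ} (hr : 1 ≤ r) (hra : 2 * |a| ≤ r ^ 2) (hs : -r < s) :
    gamowKernel a r s ≤ 2 * exp (a ^ 2 / 2 + 2 * |a|) * exp (-(1 / 2) * s ^ 2) := by
  have hv : 0 < (s + r) / r := div_pos (by linarith) (by linarith)
  calc gamowKernel a r s
      = 2 * exp (log ((s + r) / r) * a - s ^ 2 * (s + 3 * r) / (s + r)) := by
        rw [gamowKernel, rpow_def_of_pos hv, mul_assoc, ← exp_add, sub_eq_add_neg]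
    _ ≤ 2 * exp (a ^ 2 / 2 + 2 * |a| - s ^ 2 / 2) := by
        gcongr 2 * exp ?_; exact log_gamowKernel_exponent_le hr hra hs
    _ = 2 * exp (a ^ 2 / 2 + 2 * |a|) * exp (-(1 / 2) * s ^ 2) := by
        rw [mul_assoc, ← exp_add]; ring_nf

theorem gamowKernel_nonneg (a : ℝ) {r s : ℝ} (hr : 0 < r) (hs : -r < s) :
    0 ≤ gamowKernel a r s := by
  have : 0 ≤ (s + r) / r := div_nonneg (by linarith) hr.le
  unfold gamowKernel; positivity

theorem tendsto_gamowKernel (a s : ℝ) :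
    Tendsto (fun r => gamowKernel a r s) atTop (𝓝 (2 * exp (-(3 * s ^ 2)))) := by
  set F : ℝ → ℝ := fun u => 2 * (u + 1) ^ a * exp (-(s ^ 2 * (u + 3) / (u + 1)))
  have hF : ContinuousAt F 0 := by fun_prop (disch := norm_num)
  have hlim : Tendsto (fun r => F (s * r⁻¹)) atTop (𝓝 (F 0)) :=
    hF.tendsto.comp (by simpa using tendsto_inv_atTop_zero.const_mul s)
  have hF0 : F 0 = 2 * exp (-(3 * s ^ 2)) := by simp [F]; ring_nf
  rw [hF0] at hlim
  refine hlim.congr' ?_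
  filter_upwards [eventually_gt_atTop 0, eventually_gt_atTop (-s)] with r hr hrs
  have : s + r ≠ 0 := by linarith
  simp only [F, gamowKernel]
  congr 3 <;> field_simp

theorem integral_two_mul_exp_neg_three_mul_sq :
    ∫ s : ℝ, 2 * exp (-(3 * s ^ 2)) = 2 * √(π / 3) := by
  rw [integral_const_mul, ← integral_gaussian 3]
  simp only [neg_mul]

theorem tendsto_integral_gamowKernel (a : ℝ) :
    Tendsto (fun r => ∫ s in Ioi (-r), gamowKernel a r s) atTop (𝓝 (2 * √(π / 3))) := by
  simp_rw [← integral_indicator measurableSet_Ioi, ← integral_two_mul_exp_neg_three_mul_sq]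
  refine tendsto_integral_filter_of_dominated_convergence
    (fun s => 2 * exp (a ^ 2 / 2 + 2 * |a|) * exp (-(1 / 2) * s ^ 2)) ?_ ?_
    ((integrable_exp_neg_mul_sq (by norm_num)).const_mul _) ?_
  · refine .of_forall fun r => (Measurable.indicator ?_ measurableSet_Ioi).aestronglyMeasurable
    unfold gamowKernel
    fun_prop
  · filter_upwards [eventually_ge_atTop 1, eventually_ge_atTop (2 * |a|)] with r hr hra
    refine .of_forall fun s => ?_
    by_cases hs : s ∈ Ioi (-r)
    · have hra' : 2 * |a| ≤ r ^ 2 := hra.trans (by nlinarith)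
      rw [indicator_of_mem hs, Real.norm_of_nonneg (gamowKernel_nonneg a (by linarith) hs)]
      exact gamowKernel_le hr hra' hs
    · rw [indicator_of_notMem hs, norm_zero]
      positivity
  · refine .of_forall fun s => (tendsto_gamowKernel a s).congr' ?_
    filter_upwards [eventually_gt_atTop (-s)] with r hr
    exact (indicator_of_mem (neg_lt.mp hr) _).symm

theorem isEquivalent_integral_gamow (ν : ℝ) :
    (fun r : ℝ => ∫ y in Ioi 0, y ^ ν * exp (-y - 2 * r ^ 3 * y ^ (-(1:ℝ)/2)))
      ~[atTop] fun r => 2 * √(π / 3) * r ^ (2 * ν + 1) * exp (-3 * r ^ 2) := by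
  have hI := (isEquivalent_const_iff_tendsto (by positivity)).mpr
    (tendsto_integral_gamowKernel (2 * ν + 1))
  refine ((IsEquivalent.refl (u := fun r : ℝ => r ^ (2 * ν + 1) * exp (-3 * r ^ 2))).mul hI
    |>.congr_left ?_).congr_right ?_
  · filter_upwards [eventually_gt_atTop 0] with r hr
    exact (integral_eq_mul_integral_gamowKernel ν hr).symm
  · exact .of_eq (funext fun r => by simp only [Pi.mul_apply, Function.const_apply]; ring)

theorem stmt11 (ν : ℝ) :
    (fun z : ℝ => ∫ y in Set.Ioi (0:ℝ), y ^ ν * Real.exp (-y - z * y ^ (-(1:ℝ)/2)))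
      ~[atTop]
    (fun z : ℝ => 2 * (Real.pi / 3) ^ ((1:ℝ)/2) * (z^2/4) ^ ((2*ν+1)/6) *
        Real.exp (-3 * (z^2/4) ^ ((1:ℝ)/3))) := by
  have hr : Tendsto (fun z : ℝ => (z / 2) ^ (1 / 3 : ℝ)) atTop atTop :=
    (tendsto_rpow_atTop (by norm_num)).comp (tendsto_id.atTop_div_const two_pos)
  refine ((isEquivalent_integral_gamow ν).comp_tendsto hr |>.congr_left ?_).congr_right ?_
  · filter_upwards [eventually_gt_atTop 0] with z hz
    have hcube : ((z / 2) ^ (1 / 3 : ℝ)) ^ 3 = z / 2 := by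
      rw [← rpow_natCast, ← rpow_mul (by positivity)]
      norm_num
    simp only [Function.comp_apply, hcube, mul_div_cancel₀ z two_ne_zero]
  · filter_upwards [eventually_gt_atTop 0] with z hz
    have hpow (b : ℝ) : ((z / 2) ^ (1 / 3 : ℝ)) ^ b = (z ^ 2 / 4) ^ (b / 6) := by
      rw [← rpow_mul (by positivity), show z ^ 2 / 4 = (z / 2) ^ (2 : ℝ) by norm_num; ring,
        ← rpow_mul (by positivity)]
      ring_nf
    simp only [Function.comp_apply, ← rpow_natCast, hpow, sqrt_eq_rpow]
    norm_num
end

section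
/- For every fixed d > 0, a > 0 and real ρ, as z → +∞ one has the asymptotic equivalence ∫₀^d t^{−ρ} e^{−a t − z t^{−1/2}} dt ∼ d^{1−ρ} (z²/4d)^{−1/2} e^{−a d − 2 (z²/4d)^{1/2}}. -/
/-!
Substituting `t = (u + c)⁻²` with `c = d^(-1/2)` moves the maximum of the integrand to `u = 0`
and turns the integral into `e^(-z c) ∫₀^∞ e^(-z u) g(u) du` for an amplitude `g` that is
continuous on `[0, ∞)` and of exponential order. By Watson's lemma, which after rescaling
`u = v / z` is dominated convergence, the Laplace transform is `∼ g(0) / z`, and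
`e^(-z c) g(0) / z` is exactly the right-hand side.
-/

open MeasureTheory Filter Asymptotics Set Real Topology

section

variable {E : Type*} [NormedAddCommGroup E] [NormedSpace ℝ E]

theorem integral_exp_neg_mul_smul_eq (g : ℝ → E) {z : ℝ} (hz : 0 < z) :
    z • ∫ u in Ioi 0, exp (-z * u) • g u = ∫ v in Ioi 0, exp (-v) • g (v / z) := by
  have h := integral_comp_mul_left_Ioi (fun u => exp (-z * u) • g u) 0 (inv_pos.mpr hz)
  rw [mul_zero, inv_inv] at h
  rw [← h]
  refine setIntegral_congr_fun measurableSet_Ioi fun v _ => ?_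
  rw [neg_mul, mul_inv_cancel_left₀ hz.ne', inv_mul_eq_div]

theorem tendsto_smul_integral_exp_neg_mul_smul [CompleteSpace E] {g : ℝ → E}
    (hg : ContinuousOn g (Ici 0)) {C b : ℝ} (hbound : ∀ u > 0, ‖g u‖ ≤ C * exp (b * u)) :
    Tendsto (fun z : ℝ => z • ∫ u in Ioi 0, exp (-z * u) • g u) atTop (𝓝 (g 0)) := by
  have hC : 0 ≤ C :=
    nonneg_of_mul_nonneg_left ((norm_nonneg _).trans (hbound 1 one_pos)) (exp_pos _)
  have hlim : Tendsto (fun z : ℝ => ∫ v in Ioi 0, exp (-v) • g (v / z)) atTop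
      (𝓝 (∫ v in Ioi 0, exp (-v) • g 0)) := by
    refine tendsto_integral_filter_of_dominated_convergence (fun v => C * exp (-(1 / 2) * v))
      ?_ ?_ ?_ ?_
    · filter_upwards [eventually_gt_atTop 0] with z hz
      refine ContinuousOn.aestronglyMeasurable ?_ measurableSet_Ioi
      exact (continuous_exp.comp continuous_neg).continuousOn.smul
        (hg.comp (by fun_prop) fun v hv => div_nonneg (le_of_lt hv) hz.le)
    · filter_upwards [eventually_ge_atTop (2 * |b| + 1)] with z hz
      refine (ae_restrict_iff' measurableSet_Ioi).mpr (ae_of_all _ fun v hv => ?_)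
      have hz0 : 0 < z := by linarith [abs_nonneg b]
      have hexp : -v + b * (v / z) ≤ -(1 / 2) * v := by
        have : b * (v / z) ≤ v / 2 := by
          rw [mul_div_assoc', div_le_div_iff₀ hz0 two_pos]
          nlinarith [le_abs_self b, mem_Ioi.mp hv]
        linarith
      calc ‖exp (-v) • g (v / z)‖ = exp (-v) * ‖g (v / z)‖ := by
            rw [norm_smul, Real.norm_of_nonneg (exp_pos _).le]
        _ ≤ exp (-v) * (C * exp (b * (v / z))) :=
            mul_le_mul_of_nonneg_left (hbound _ (div_pos hv hz0)) (exp_pos _).le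
        _ = C * exp (-v + b * (v / z)) := by rw [exp_add]; ring
        _ ≤ C * exp (-(1 / 2) * v) := by gcongr
    · exact (exp_neg_integrableOn_Ioi 0 (by norm_num)).const_mul C
    · refine (ae_restrict_iff' measurableSet_Ioi).mpr (ae_of_all _ fun v hv => ?_)
      refine tendsto_const_nhds.smul ((hg.continuousWithinAt self_mem_Ici).tendsto.comp ?_)
      exact tendsto_nhdsWithin_iff.mpr ⟨tendsto_const_nhds.div_atTop tendsto_id,
        eventually_gt_atTop 0 |>.mono fun z hz => div_nonneg (le_of_lt hv) hz.le⟩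
  rw [integral_smul_const, integral_exp_neg_Ioi_zero, one_smul] at hlim
  refine hlim.congr' ?_
  filter_upwards [eventually_gt_atTop 0] with z hz
  exact (integral_exp_neg_mul_smul_eq g hz).symm

theorem integral_exp_neg_mul_smul_isEquivalent [CompleteSpace E] {g : ℝ → E}
    (hg : ContinuousOn g (Ici 0)) (hg0 : g 0 ≠ 0) {C b : ℝ}
    (hbound : ∀ u > 0, ‖g u‖ ≤ C * exp (b * u)) :
    (fun z : ℝ => ∫ u in Ioi 0, exp (-z * u) • g u) ~[atTop] fun z => z⁻¹ • g 0 := by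
  have hsmall : (fun z : ℝ => z • (∫ u in Ioi 0, exp (-z * u) • g u) - g 0) =o[atTop]
      fun _ => g 0 :=
    (isLittleO_const_iff hg0).mpr (tendsto_sub_nhds_zero_iff.mpr
      (tendsto_smul_integral_exp_neg_mul_smul hg hbound))
  refine ((isBigO_refl (fun z : ℝ => z⁻¹) atTop).smul_isLittleO hsmall).congr' ?_ .rfl
  filter_upwards [eventually_ne_atTop 0] with z hz
  rw [Pi.sub_apply, smul_sub, inv_smul_smul₀ hz]

theorem integral_Ioc_eq_integral_Ioi_inv_sq {c : ℝ} (hc : 0 < c) (f : ℝ → E) :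
    ∫ t in Ioc 0 (c ^ 2)⁻¹, f t =
      ∫ u in Ioi 0, (2 / (u + c) ^ 3) • f ((u + c) ^ 2)⁻¹ := by
  set φ : ℝ → ℝ := fun u => ((u + c) ^ 2)⁻¹
  have hpos : ∀ u ∈ Ici (0 : ℝ), 0 < u + c := fun u hu => add_pos_of_nonneg_of_pos hu hc
  have hderiv : ∀ u ∈ Ici (0 : ℝ), HasDerivWithinAt φ (-2 / (u + c) ^ 3) (Ici 0) u := by
    intro u hu
    have hsq : HasDerivAt (fun y => (y + c) ^ 2) (2 * (u + c)) u := by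
      simpa using ((hasDerivAt_id u).add_const c).fun_pow 2
    have hne := (hpos u hu).ne'
    have h := hsq.fun_inv (pow_ne_zero 2 hne)
    rw [show -(2 * (u + c)) / ((u + c) ^ 2) ^ 2 = -2 / (u + c) ^ 3 by field_simp] at h
    exact h.hasDerivWithinAt
  have hanti : StrictAntiOn φ (Ici 0) := fun u hu v hv huv =>
    inv_strictAntiOn (pow_pos (hpos u hu) 2) (pow_pos (hpos v hv) 2)
      (pow_lt_pow_left₀ (by linarith) (hpos u hu).le two_ne_zero)
  have himage : φ '' Ici 0 = Ioc 0 (c ^ 2)⁻¹ := by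
    apply Subset.antisymm
    · rintro _ ⟨u, hu, rfl⟩
      have := hpos u hu
      exact ⟨by positivity, inv_anti₀ (by positivity)
        (pow_le_pow_left₀ hc.le (by linarith [mem_Ici.mp hu]) 2)⟩
    · rintro t ⟨ht, htc⟩
      refine ⟨√t⁻¹ - c, ?_, ?_⟩
      · rw [mem_Ici, sub_nonneg, ← Real.sqrt_sq hc.le]
        exact Real.sqrt_le_sqrt ((le_inv_comm₀ ht (pow_pos hc 2)).mp htc)
      · simp [φ, Real.sq_sqrt ht.le]
  rw [← himage, integral_image_eq_integral_abs_deriv_smul measurableSet_Ici hderiv hanti.injOn,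
    integral_Ici_eq_integral_Ioi]
  refine setIntegral_congr_fun measurableSet_Ioi fun u hu => ?_
  rw [abs_div, abs_neg, abs_two, abs_of_pos (pow_pos (hpos u (mem_Ici_of_Ioi hu)) 3)]

end

theorem sq_rpow {x : ℝ} (hx : 0 ≤ x) (s : ℝ) : (x ^ 2) ^ s = x ^ (2 * s) := by
  rw [← rpow_natCast_mul hx, Nat.cast_ofNat]

theorem inv_sq_rpow {x : ℝ} (hx : 0 ≤ x) (s : ℝ) : ((x ^ 2)⁻¹) ^ s = x ^ (-(2 * s)) := by
  rw [inv_rpow (pow_nonneg hx 2), sq_rpow hx, rpow_neg hx]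

theorem rpow_le_exp_abs_mul {c x : ℝ} (hc : 0 < c) (hcx : c ≤ x) (s : ℝ) :
    x ^ s ≤ exp (|s| * (x + |log c|)) := by
  have hx : 0 < x := hc.trans_le hcx
  have hlog : |log x| ≤ x + |log c| := abs_le.mpr
    ⟨by linarith [neg_abs_le (log c), log_le_log hc hcx],
      by linarith [log_le_self hx.le, abs_nonneg (log c)]⟩
  rw [rpow_def_of_pos hx, exp_le_exp, mul_comm]
  calc s * log x ≤ |s| * |log x| := by rw [← abs_mul]; exact le_abs_self _
    _ ≤ |s| * (x + |log c|) := mul_le_mul_of_nonneg_left hlog (abs_nonneg s)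

/-- The integrand after the substitution `t = (u + c)⁻²`, without its factor
`exp (-z * (u + c))`. -/
noncomputable def rateAmplitude (a ρ c u : ℝ) : ℝ :=
  2 * (u + c) ^ (2 * ρ - 3) * exp (-a * ((u + c) ^ 2)⁻¹)

section rateAmplitude

variable {a ρ c : ℝ}

theorem rateAmplitude_pos (hc : 0 < c) {u : ℝ} (hu : 0 ≤ u) : 0 < rateAmplitude a ρ c u := by
  have : 0 < u + c := by linarith
  unfold rateAmplitude
  positivity

theorem continuousOn_rateAmplitude (hc : 0 < c) :
    ContinuousOn (rateAmplitude a ρ c) (Ici 0) := by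
  intro u hu
  have : u + c ≠ 0 := by linarith [mem_Ici.mp hu]
  apply ContinuousAt.continuousWithinAt
  unfold rateAmplitude
  fun_prop (disch := simp [this])

theorem norm_rateAmplitude_le (hc : 0 < c) {u : ℝ} (hu : 0 ≤ u) :
    ‖rateAmplitude a ρ c u‖ ≤
      2 * exp (|2 * ρ - 3| * (c + |log c|) + |a| * (c ^ 2)⁻¹) * exp (|2 * ρ - 3| * u) := by
  have hcx : c ≤ u + c := by linarith
  have hexp : -a * ((u + c) ^ 2)⁻¹ ≤ |a| * (c ^ 2)⁻¹ := calc
    -a * ((u + c) ^ 2)⁻¹ ≤ |a| * ((u + c) ^ 2)⁻¹ := by gcongr; exact neg_le_abs a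
    _ ≤ |a| * (c ^ 2)⁻¹ := by gcongr
  rw [Real.norm_of_nonneg (rateAmplitude_pos hc hu).le]
  calc rateAmplitude a ρ c u
      ≤ 2 * exp (|2 * ρ - 3| * (u + c + |log c|)) * exp (|a| * (c ^ 2)⁻¹) := by
        unfold rateAmplitude
        gcongr
        exact rpow_le_exp_abs_mul hc hcx _
    _ = _ := by rw [mul_assoc, ← exp_add, mul_assoc, ← exp_add]; ring_nf

theorem integral_Ioc_rpow_mul_exp_eq (hc : 0 < c) (z : ℝ) :
    ∫ t in Ioc 0 (c ^ 2)⁻¹, t ^ (-ρ) * exp (-a * t - z * t ^ (-(1:ℝ)/2)) =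
      exp (-z * c) * ∫ u in Ioi 0, exp (-z * u) • rateAmplitude a ρ c u := by
  rw [integral_Ioc_eq_integral_Ioi_inv_sq hc, ← integral_const_mul]
  refine setIntegral_congr_fun measurableSet_Ioi fun u hu => ?_
  have hx : 0 < u + c := by linarith [mem_Ioi.mp hu]
  have hpow : (u + c) ^ (2 * ρ - 3) = (u + c) ^ (2 * ρ) / (u + c) ^ 3 := by
    rw [rpow_sub hx, rpow_ofNat]
  have hρ : ((u + c) ^ 2)⁻¹ ^ (-ρ) = (u + c) ^ (2 * ρ) := by
    rw [inv_sq_rpow hx.le, mul_neg, neg_neg]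
  have hhalf : ((u + c) ^ 2)⁻¹ ^ (-(1:ℝ)/2) = u + c := by
    rw [inv_sq_rpow hx.le]; norm_num
  rw [hρ, hhalf, rateAmplitude, hpow, smul_eq_mul, smul_eq_mul,
    show -a * ((u + c) ^ 2)⁻¹ - z * (u + c) = -a * ((u + c) ^ 2)⁻¹ + -z * u + -z * c by ring,
    exp_add, exp_add]
  field_simp

theorem rpow_mul_rpow_mul_exp_eq (hc : 0 < c) {z : ℝ} (hz : 0 < z) :
    ((c ^ 2)⁻¹) ^ (1 - ρ) * (z ^ 2 / (4 * (c ^ 2)⁻¹)) ^ (-(1:ℝ)/2) *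
        exp (-a * (c ^ 2)⁻¹ - 2 * (z ^ 2 / (4 * (c ^ 2)⁻¹)) ^ ((1:ℝ)/2)) =
      exp (-z * c) * (z⁻¹ • rateAmplitude a ρ c 0) := by
  have hw : z ^ 2 / (4 * (c ^ 2)⁻¹) = (c * z / 2) ^ 2 := by field_simp; ring
  have hw0 : 0 ≤ c * z / 2 := by positivity
  have hρ : c ^ (-(2 * (1 - ρ))) = c ^ (2 * ρ - 3) * c := by
    rw [← rpow_add_one hc.ne']; ring_nf
  rw [hw, sq_rpow hw0, sq_rpow hw0, inv_sq_rpow hc.le, hρ, show 2 * ((1:ℝ)/2) = 1 by norm_num,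
    rpow_one, show 2 * (-(1:ℝ)/2) = -1 by norm_num, rpow_neg_one, rateAmplitude, zero_add,
    show -a * (c ^ 2)⁻¹ - 2 * (c * z / 2) = -a * (c ^ 2)⁻¹ + -z * c by ring, exp_add,
    smul_eq_mul]
  field_simp

end rateAmplitude

theorem stmt12_general (d a ρ : ℝ) (hd : 0 < d) :
    (fun z : ℝ => ∫ t in Set.Ioc (0:ℝ) d, t ^ (-ρ) * Real.exp (-a * t - z * t ^ (-(1:ℝ)/2)))
      ~[atTop]
    (fun z : ℝ => d ^ (1 - ρ) * (z^2/(4*d)) ^ (-(1:ℝ)/2) *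
        Real.exp (-a * d - 2 * (z^2/(4*d)) ^ ((1:ℝ)/2))) := by
  obtain ⟨c, hc, rfl⟩ : ∃ c, 0 < c ∧ d = (c ^ 2)⁻¹ :=
    ⟨(√d)⁻¹, by positivity, by rw [inv_pow, sq_sqrt hd.le, inv_inv]⟩
  have hlaplace := integral_exp_neg_mul_smul_isEquivalent (continuousOn_rateAmplitude hc)
    (rateAmplitude_pos (a := a) (ρ := ρ) hc le_rfl).ne'
    fun u hu => norm_rateAmplitude_le hc (le_of_lt hu)
  have hexp : (fun z : ℝ => exp (-z * c)) ~[atTop] fun z => exp (-z * c) := .refl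
  refine ((hexp.mul hlaplace).congr_left ?_).congr_right ?_
  · exact .of_forall fun z => (integral_Ioc_rpow_mul_exp_eq hc z).symm
  · filter_upwards [eventually_gt_atTop 0] with z hz
    exact (rpow_mul_rpow_mul_exp_eq hc hz).symm

theorem stmt12 (d a ρ : ℝ) (hd : 0 < d) (ha : 0 < a) :
    (fun z : ℝ => ∫ t in Set.Ioc (0:ℝ) d, t ^ (-ρ) * Real.exp (-a * t - z * t ^ (-(1:ℝ)/2)))
      ~[atTop]
    (fun z : ℝ => d ^ (1 - ρ) * (z^2/(4*d)) ^ (-(1:ℝ)/2) *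
        Real.exp (-a * d - 2 * (z^2/(4*d)) ^ ((1:ℝ)/2))) :=
  stmt12_general d a ρ hd
end

section
/- Let ν be real, b > 0 and 0 < δ < 1/2. Then as z → +∞ one has the asymptotic equivalence ∫₀^∞ y^ν e^{−y − b y^δ − z y^{−1/2}} dy ∼ 2 (π/3)^{1/2} (z²/4)^{(2ν+1)/6} e^{−3 (z²/4)^{1/3} − b (z²/4)^{δ/3}}. -/
/-!
Substituting `y = X u` with `X = (z² / 4) ^ (1/3)`, so that `z = 2 X ^ (3/2)`, turns the integral
into `X ^ (ν + 1) ∫ u ^ ν exp (-X φ(u) - b X ^ δ u ^ δ) du` with `φ(u) = u + 2 / √u`. The phase `φ`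
has its unique minimum `3` at `u = 1`, with `φ''(1) = 3/2`, so Laplace's method applies. Away from
`[1/2, 3/2]` one has `φ ≥ 3 + 1/25`, and the factor `exp (b X ^ δ)` is subexponential, so that
part is negligible. On `[1/2, 3/2]` the substitution `u = 1 + t / √X` produces integrands tending
to `exp (-3 t² / 4)` and dominated by a multiple of `exp (-t² / 18)`: since `δ < 1/2`, the change
of the depletion factor is `b X ^ δ |u ^ δ - 1| ≤ b X ^ (δ - 1/2) |t| ≤ |t|` for large `X`.
-/

open MeasureTheory Filter Asymptotics Set Topology Real

lemma abs_one_add_rpow_sub_one_le {s p : ℝ} (hs : -1 ≤ s) (hp₀ : 0 ≤ p) (hp₁ : p ≤ 1) :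
    |(1 + s) ^ p - 1| ≤ |s| := by
  have hupper : (1 + s) ^ p ≤ 1 + p * s := rpow_one_add_le_one_add_mul_self hs hp₀ hp₁
  rcases le_or_gt 0 s with h | h
  · have : 1 ≤ (1 + s) ^ p := one_le_rpow (by linarith) hp₀
    rw [abs_of_nonneg (by linarith), abs_of_nonneg h]
    nlinarith
  · have hlower : (1 + s) ^ (1 : ℝ) ≤ (1 + s) ^ p :=
      rpow_le_rpow_of_exponent_ge' (by linarith) (by linarith) hp₀ hp₁
    rw [rpow_one] at hlower
    rw [abs_le, abs_of_neg h]
    constructor <;> nlinarith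

lemma rpow_le_two_rpow_abs {u : ℝ} (ν : ℝ) (h₁ : 1/2 ≤ u) (h₂ : u ≤ 2) : u ^ ν ≤ 2 ^ |ν| := by
  rcases le_or_gt 0 ν with hν | hν
  · calc u ^ ν ≤ 2 ^ ν := rpow_le_rpow (by linarith) h₂ hν
      _ ≤ 2 ^ |ν| := rpow_le_rpow_of_exponent_le one_le_two (le_abs_self ν)
  · calc u ^ ν ≤ (1/2 : ℝ) ^ ν := rpow_le_rpow_of_nonpos (by norm_num) h₁ hν.le
      _ = 2 ^ |ν| := by
        rw [one_div, inv_rpow zero_le_two, ← rpow_neg zero_le_two, abs_of_neg hν]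

lemma exp_neg_le_factorial_div_pow {r : ℝ} (hr : 0 < r) (n : ℕ) :
    exp (-r) ≤ n.factorial / r ^ n := by
  rw [exp_neg, le_div_iff₀ (by positivity), inv_mul_le_iff₀ (exp_pos r)]
  have := pow_div_factorial_le_exp (x := r) hr.le n
  rw [div_le_iff₀ (by positivity)] at this
  linarith

lemma tendsto_sqrt_mul_exp_mul_rpow_sub_mul_atTop (b : ℝ) {δ η : ℝ} (hδ : δ < 1)
    (hη : 0 < η) :
    Tendsto (fun x ↦ √x * exp (b * x ^ δ - η * x)) atTop (𝓝 0) := by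
  have hsmall : ∀ᶠ x in atTop, b * x ^ (δ - 1) ≤ η / 2 := by
    have h := (tendsto_rpow_neg_atTop (y := 1 - δ) (by linarith)).const_mul b
    rw [mul_zero, neg_sub] at h
    exact h.eventually (eventually_le_nhds (by positivity))
  refine squeeze_zero' (Eventually.of_forall fun x ↦ by positivity) ?_
    (tendsto_rpow_mul_exp_neg_mul_atTop_nhds_zero (1/2) (η / 2) (by positivity))
  filter_upwards [hsmall, eventually_gt_atTop 0] with x hx hx₀
  have hsplit : x ^ δ = x ^ (δ - 1) * x := by
    rw [← rpow_add_one hx₀.ne', sub_add_cancel]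
  rw [sqrt_eq_rpow]
  gcongr
  rw [hsplit]
  nlinarith

lemma rpow_eq_rpow_sub_half_mul_sqrt {x : ℝ} (hx : 0 < x) (δ : ℝ) :
    x ^ δ = x ^ (δ - 1/2) * √x := by
  rw [sqrt_eq_rpow, ← rpow_add hx, sub_add_cancel]

lemma mul_div_sqrt_sq {x : ℝ} (hx : 0 < x) (t : ℝ) : x * (t / √x) ^ 2 = t ^ 2 := by
  rw [div_pow, sq_sqrt hx.le]; field_simp

lemma tendsto_rpow_sub_half_atTop_nhds_zero {δ : ℝ} (hδ : δ < 1/2) :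
    Tendsto (fun x : ℝ ↦ x ^ (δ - 1/2)) atTop (𝓝 0) := by
  simpa only [neg_sub] using tendsto_rpow_neg_atTop (y := 1/2 - δ) (by linarith)

lemma tendsto_one_add_div_sqrt_atTop (t : ℝ) : Tendsto (fun x ↦ 1 + t / √x) atTop (𝓝 1) := by
  simpa using (tendsto_const_nhds.div_atTop tendsto_sqrt_atTop).const_add 1

lemma integral_comp_one_add_div (g : ℝ → ℝ) {c : ℝ} (hc : 0 < c) :
    ∫ t, g (1 + t / c) = c * ∫ u, g u := by
  rw [Measure.integral_comp_div (fun v ↦ g (1 + v)) c, integral_add_left_eq_self,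
    abs_of_pos hc, smul_eq_mul]

noncomputable def gamowPhase (u : ℝ) : ℝ := u + 2 / √u

lemma gamowPhase_sub_three {u : ℝ} (hu : 0 < u) :
    gamowPhase u - 3 = (√u - 1) ^ 2 * (√u + 2) / √u := by
  obtain ⟨w, hw, rfl⟩ : ∃ w, 0 < w ∧ u = w ^ 2 := ⟨√u, sqrt_pos.mpr hu, (sq_sqrt hu.le).symm⟩
  rw [gamowPhase, sqrt_sq hw.le]
  field_simp
  ring

lemma three_le_gamowPhase {u : ℝ} (hu : 0 < u) : 3 ≤ gamowPhase u := by
  have hs : 0 < √u := sqrt_pos.mpr hu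
  exact sub_nonneg.mp (by rw [gamowPhase_sub_three hu]; positivity)

lemma gamowPhase_sub_three_eq_sq_mul {u : ℝ} (hu : 0 < u) :
    gamowPhase u - 3 = (u - 1) ^ 2 * ((√u + 2) / (√u * (√u + 1) ^ 2)) := by
  rw [gamowPhase_sub_three hu]
  obtain ⟨w, hw, rfl⟩ : ∃ w, 0 < w ∧ u = w ^ 2 := ⟨√u, sqrt_pos.mpr hu, (sq_sqrt hu.le).symm⟩
  rw [sqrt_sq hw.le]
  field_simp
  ring

lemma sq_div_nine_le_gamowPhase_sub_three {u : ℝ} (hu : u ∈ Icc (1/2 : ℝ) (3/2)) :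
    (u - 1) ^ 2 / 9 ≤ gamowPhase u - 3 := by
  have hu0 : 0 < u := by linarith [hu.1]
  have hs : 0 < √u := sqrt_pos.mpr hu0
  have hs2 : √u ≤ 2 := sqrt_le_iff.mpr ⟨by norm_num, by linarith [hu.2]⟩
  have hq : 1 / 9 ≤ (√u + 2) / (√u * (√u + 1) ^ 2) := by
    rw [div_le_div_iff₀ (by norm_num) (by positivity)]
    nlinarith
  rw [gamowPhase_sub_three_eq_sq_mul hu0]
  nlinarith [sq_nonneg (u - 1)]

lemma three_add_le_gamowPhase_of_notMem_Icc {u : ℝ} (hu : 0 < u)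
    (hu' : u ∉ Icc (1/2 : ℝ) (3/2)) : 3 + 1/25 ≤ gamowPhase u := by
  have hs : 0 < √u := sqrt_pos.mpr hu
  have hsq : √u ^ 2 = u := sq_sqrt hu.le
  have hfar : 1/25 ≤ (√u - 1) ^ 2 := by
    rcases not_and_or.mp hu' with h | h <;> push Not at h <;> nlinarith
  have : (√u - 1) ^ 2 ≤ (√u - 1) ^ 2 * (√u + 2) / √u := by
    rw [le_div_iff₀ hs]; nlinarith [sq_nonneg (√u - 1)]
  linarith [gamowPhase_sub_three hu]

@[fun_prop]
lemma measurable_gamowPhase : Measurable gamowPhase := by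
  unfold gamowPhase; fun_prop

lemma integrableOn_rpow_mul_exp_neg_gamowPhase (ν : ℝ) :
    IntegrableOn (fun u ↦ u ^ ν * exp (-gamowPhase u)) (Ioi 0) := by
  obtain ⟨n, hn⟩ := exists_nat_ge (-2 * ν)
  have hΓ := (GammaIntegral_convergent (s := ν + n / 2 + 1) (by linarith)).const_mul
    (n.factorial / 2 ^ n : ℝ)
  refine hΓ.mono' (by fun_prop) ?_
  filter_upwards [self_mem_ae_restrict measurableSet_Ioi] with u (hu : 0 < u)
  have hs : 0 < √u := sqrt_pos.mpr hu
  have hpow : exp (-(2 / √u)) ≤ n.factorial / 2 ^ n * u ^ ((n : ℝ) / 2) := by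
    calc exp (-(2 / √u)) ≤ n.factorial / (2 / √u) ^ n :=
          exp_neg_le_factorial_div_pow (by positivity) n
      _ = n.factorial / 2 ^ n * u ^ ((n : ℝ) / 2) := by
        have : √u ^ n = u ^ ((n : ℝ) / 2) := by
          rw [sqrt_eq_rpow, ← rpow_natCast, ← rpow_mul hu.le]; ring_nf
        rw [div_pow, this]
        field_simp
  rw [norm_of_nonneg (by positivity), gamowPhase, neg_add, exp_add]
  calc u ^ ν * (exp (-u) * exp (-(2 / √u)))
      ≤ u ^ ν * (exp (-u) * (n.factorial / 2 ^ n * u ^ ((n : ℝ) / 2))) := by gcongr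
    _ = n.factorial / 2 ^ n * (exp (-u) * u ^ (ν + n / 2 + 1 - 1)) := by
        rw [add_sub_cancel_right, rpow_add hu]; ring

noncomputable def gamowIntegrand (ν b δ x u : ℝ) : ℝ :=
  u ^ ν * exp (-(x * gamowPhase u) - b * x ^ δ * u ^ δ)

lemma measurable_gamowIntegrand (ν b δ x : ℝ) : Measurable (gamowIntegrand ν b δ x) := by
  unfold gamowIntegrand; fun_prop

lemma gamowIntegrand_nonneg (ν b δ x : ℝ) {u : ℝ} (hu : 0 ≤ u) : 0 ≤ gamowIntegrand ν b δ x u := by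
  unfold gamowIntegrand; positivity

noncomputable def centredIntegrand (ν b δ x u : ℝ) : ℝ :=
  u ^ ν * exp (-(x * (gamowPhase u - 3)) - b * x ^ δ * (u ^ δ - 1))

lemma exp_mul_gamowIntegrand (ν b δ x u : ℝ) :
    exp (3 * x + b * x ^ δ) * gamowIntegrand ν b δ x u = centredIntegrand ν b δ x u := by
  rw [gamowIntegrand, centredIntegrand, mul_left_comm, ← exp_add]
  ring_nf

section Laplace

variable {ν b δ : ℝ}

lemma gamowIntegrand_le (hb : 0 ≤ b) {x u m : ℝ} (hx : 1 ≤ x) (hu : 0 < u)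
    (hm : m ≤ gamowPhase u) :
    gamowIntegrand ν b δ x u ≤ exp (-((x - 1) * m)) * (u ^ ν * exp (-gamowPhase u)) := by
  have hdepl : 0 ≤ b * x ^ δ * u ^ δ := by positivity
  have hphase : (x - 1) * m ≤ (x - 1) * gamowPhase u := by gcongr
  rw [gamowIntegrand, mul_left_comm, ← exp_add]
  gcongr
  linarith

lemma integrableOn_gamowIntegrand (hb : 0 ≤ b) {x : ℝ} (hx : 1 ≤ x) :
    IntegrableOn (gamowIntegrand ν b δ x) (Ioi 0) := by
  refine ((integrableOn_rpow_mul_exp_neg_gamowPhase ν).const_mul (exp (-((x - 1) * 3)))).mono'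
    (measurable_gamowIntegrand ν b δ x).aestronglyMeasurable ?_
  filter_upwards [self_mem_ae_restrict measurableSet_Ioi] with u (hu : 0 < u)
  rw [norm_of_nonneg (gamowIntegrand_nonneg ν b δ x hu.le)]
  exact gamowIntegrand_le hb hx hu (three_le_gamowPhase hu)

lemma setIntegral_gamowIntegrand_tail_le (hb : 0 ≤ b) {x : ℝ} (hx : 1 ≤ x) :
    ∫ u in Ioi 0 \ Icc (1/2) (3/2), gamowIntegrand ν b δ x u
      ≤ exp (-((x - 1) * (3 + 1/25))) * ∫ u in Ioi 0, u ^ ν * exp (-gamowPhase u) := by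
  have hbase := integrableOn_rpow_mul_exp_neg_gamowPhase ν
  have htail : Ioi 0 \ Icc (1/2 : ℝ) (3/2) ⊆ Ioi 0 := sdiff_subset
  rw [← integral_const_mul]
  calc ∫ u in Ioi 0 \ Icc (1/2) (3/2), gamowIntegrand ν b δ x u
      ≤ ∫ u in Ioi 0 \ Icc (1/2) (3/2), exp (-((x - 1) * (3 + 1/25))) *
          (u ^ ν * exp (-gamowPhase u)) :=
        setIntegral_mono_on ((integrableOn_gamowIntegrand hb hx).mono_set htail)
          ((hbase.mono_set htail).const_mul _) (measurableSet_Ioi.diff measurableSet_Icc)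
          fun u hu ↦
            gamowIntegrand_le hb hx hu.1 (three_add_le_gamowPhase_of_notMem_Icc hu.1 hu.2)
    _ ≤ _ := setIntegral_mono_set (hbase.const_mul _)
          (ae_restrict_of_forall_mem measurableSet_Ioi fun u (hu : 0 < u) ↦ by positivity)
          htail.eventuallyLE

lemma tendsto_gamowIntegrand_tail (hb : 0 ≤ b) (hδ : δ < 1) :
    Tendsto (fun x ↦ √x * exp (3 * x + b * x ^ δ) *
      ∫ u in Ioi 0 \ Icc (1/2) (3/2), gamowIntegrand ν b δ x u) atTop (𝓝 0) := by
  set K := ∫ u in Ioi 0, u ^ ν * exp (-gamowPhase u)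
  have hdecay := (tendsto_sqrt_mul_exp_mul_rpow_sub_mul_atTop b hδ
    (by norm_num : (0 : ℝ) < 1/25)).const_mul (K * exp (3 + 1/25))
  rw [mul_zero] at hdecay
  refine squeeze_zero' ?_ ?_ hdecay
  · filter_upwards with x
    exact mul_nonneg (by positivity) (setIntegral_nonneg (measurableSet_Ioi.diff measurableSet_Icc)
      fun u hu ↦ gamowIntegrand_nonneg ν b δ x (le_of_lt hu.1))
  · filter_upwards [eventually_ge_atTop 1] with x hx
    calc √x * exp (3 * x + b * x ^ δ) * ∫ u in Ioi 0 \ Icc (1/2) (3/2), gamowIntegrand ν b δ x u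
        ≤ √x * exp (3 * x + b * x ^ δ) * (exp (-((x - 1) * (3 + 1/25))) * K) := by
          gcongr; exact setIntegral_gamowIntegrand_tail_le hb hx
      _ = K * exp (3 + 1/25) * (√x * exp (b * x ^ δ - 1/25 * x)) := by
          have hexp : exp (3 * x + b * x ^ δ) * exp (-((x - 1) * (3 + 1/25)))
              = exp (3 + 1/25) * exp (b * x ^ δ - 1/25 * x) := by
            rw [← exp_add, ← exp_add]; ring_nf
          linear_combination (√x * K) * hexp

lemma centredIntegrand_le (hb : 0 ≤ b) (hδ₀ : 0 ≤ δ) (hδ₁ : δ ≤ 1) {x u : ℝ} (hx : 0 < x)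
    (hbx : b * x ^ (δ - 1/2) ≤ 1) (hu : u ∈ Icc (1/2 : ℝ) (3/2)) :
    centredIntegrand ν b δ x u ≤ 2 ^ |ν| * exp (9/2) * exp (-(1/18) * (x * (u - 1) ^ 2)) := by
  obtain ⟨hu₁, hu₂⟩ := hu
  set T := √x * |u - 1| with hT
  have hT2 : T ^ 2 = x * (u - 1) ^ 2 := by rw [hT, mul_pow, sq_sqrt hx.le, sq_abs]
  have hphase : x * (u - 1) ^ 2 / 9 ≤ x * (gamowPhase u - 3) := by
    rw [mul_div_assoc]; gcongr; exact sq_div_nine_le_gamowPhase_sub_three ⟨hu₁, hu₂⟩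
  have hdepl : -(b * x ^ δ * (u ^ δ - 1)) ≤ T := by
    have hu' : |u ^ δ - 1| ≤ |u - 1| := by
      simpa using abs_one_add_rpow_sub_one_le (s := u - 1) (by linarith) hδ₀ hδ₁
    calc -(b * x ^ δ * (u ^ δ - 1)) ≤ |b * x ^ δ * (u ^ δ - 1)| := neg_le_abs _
      _ = b * x ^ δ * |u ^ δ - 1| := by
          rw [abs_mul, abs_of_nonneg (by positivity : (0 : ℝ) ≤ b * x ^ δ)]
      _ ≤ b * x ^ δ * |u - 1| := by gcongr
      _ = b * x ^ (δ - 1/2) * T := by rw [rpow_eq_rpow_sub_half_mul_sqrt hx, hT]; ring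
      _ ≤ T := mul_le_of_le_one_left (by positivity) hbx
  -- the exponent is at most `-T² / 9 + T ≤ 9/2 - T² / 18`
  calc centredIntegrand ν b δ x u
      ≤ 2 ^ |ν| * exp (-(x * (gamowPhase u - 3)) - b * x ^ δ * (u ^ δ - 1)) := by
        unfold centredIntegrand; gcongr; exact rpow_le_two_rpow_abs ν hu₁ (by linarith)
    _ ≤ 2 ^ |ν| * exp (9/2 + -(1/18) * (x * (u - 1) ^ 2)) := by
        gcongr; nlinarith [sq_nonneg (T - 9)]
    _ = 2 ^ |ν| * exp (9/2) * exp (-(1/18) * (x * (u - 1) ^ 2)) := by rw [exp_add, mul_assoc]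

lemma tendsto_centredIntegrand (hδ₀ : 0 ≤ δ) (hδ₁ : δ < 1/2) (t : ℝ) :
    Tendsto (fun x ↦ centredIntegrand ν b δ x (1 + t / √x)) atTop
      (𝓝 (exp (-(3/4) * t ^ 2))) := by
  have hu := tendsto_one_add_div_sqrt_atTop t
  have hpos : ∀ᶠ x in atTop, 0 < x ∧ 1/2 ≤ 1 + t / √x :=
    (eventually_gt_atTop 0).and (hu.eventually (eventually_ge_nhds (by norm_num)))
  have hpow : Tendsto (fun x ↦ (1 + t / √x) ^ ν) atTop (𝓝 1) := by
    simpa [Function.comp_def] using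
      (continuousAt_rpow_const 1 ν (Or.inl one_ne_zero)).tendsto.comp hu
  have hphase : Tendsto (fun x ↦ x * (gamowPhase (1 + t / √x) - 3)) atTop
      (𝓝 (3/4 * t ^ 2)) := by
    have hq : ContinuousAt (fun u ↦ (√u + 2) / (√u * (√u + 1) ^ 2)) 1 :=
      ContinuousAt.div (by fun_prop) (by fun_prop) (by norm_num)
    have := (hq.tendsto.comp hu).const_mul (t ^ 2)
    norm_num at this
    rw [mul_comm]
    refine this.congr' ?_
    filter_upwards [hpos] with x ⟨hx, hst⟩
    rw [gamowPhase_sub_three_eq_sq_mul (by linarith), add_sub_cancel_left, ← mul_assoc,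
      mul_div_sqrt_sq hx]
  have hdepl : Tendsto (fun x ↦ b * x ^ δ * ((1 + t / √x) ^ δ - 1)) atTop (𝓝 0) := by
    have hbound := (tendsto_rpow_sub_half_atTop_nhds_zero hδ₁).const_mul (|b| * |t|)
    rw [mul_zero] at hbound
    refine squeeze_zero_norm' ?_ hbound
    filter_upwards [hpos] with x ⟨hx, hst⟩
    calc ‖b * x ^ δ * ((1 + t / √x) ^ δ - 1)‖ = |b| * x ^ δ * |(1 + t / √x) ^ δ - 1| := by
          rw [norm_eq_abs, abs_mul, abs_mul, abs_of_nonneg (by positivity : 0 ≤ x ^ δ)]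
      _ ≤ |b| * x ^ δ * |t / √x| := by
          have := abs_one_add_rpow_sub_one_le (s := t / √x) (by linarith) hδ₀ (by linarith)
          gcongr
      _ = |b| * |t| * x ^ (δ - 1/2) := by
          rw [rpow_eq_rpow_sub_half_mul_sqrt hx, abs_div, abs_of_pos (sqrt_pos.mpr hx)]
          field_simp
  have := hpow.mul (continuous_exp.continuousAt.tendsto.comp (hphase.neg.sub hdepl))
  simpa [centredIntegrand, Function.comp_def, neg_mul] using this

lemma tendsto_gamowIntegrand_central (hb : 0 ≤ b) (hδ₀ : 0 ≤ δ) (hδ₁ : δ < 1/2) :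
    Tendsto (fun x ↦ √x * exp (3 * x + b * x ^ δ) *
      ∫ u in Icc (1/2) (3/2), gamowIntegrand ν b δ x u) atTop (𝓝 √(π / (3/4))) := by
  set W := Icc (1/2 : ℝ) (3/2)
  set F : ℝ → ℝ → ℝ := fun x t ↦
    exp (3 * x + b * x ^ δ) * W.indicator (gamowIntegrand ν b δ x) (1 + t / √x)
  have hsubst : ∀ᶠ x in atTop, ∫ t, F x t
      = √x * exp (3 * x + b * x ^ δ) * ∫ u in W, gamowIntegrand ν b δ x u := by
    filter_upwards [eventually_gt_atTop 0] with x hx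
    rw [integral_const_mul, integral_comp_one_add_div _ (sqrt_pos.mpr hx),
      integral_indicator measurableSet_Icc]
    ring
  have hbx : ∀ᶠ x : ℝ in atTop, b * x ^ (δ - 1/2) ≤ 1 := by
    have h := (tendsto_rpow_sub_half_atTop_nhds_zero hδ₁).const_mul b
    rw [mul_zero] at h
    exact h.eventually (eventually_le_nhds one_pos)
  rw [← integral_gaussian]
  refine (tendsto_integral_filter_of_dominated_convergence
    (fun t ↦ 2 ^ |ν| * exp (9/2) * exp (-(1/18) * t ^ 2)) ?_ ?_ ?_ ?_).congr' hsubst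
  · refine Eventually.of_forall fun x ↦ (Measurable.aestronglyMeasurable ?_)
    exact measurable_const.mul
      (((measurable_gamowIntegrand ν b δ x).indicator measurableSet_Icc).comp (by fun_prop))
  · filter_upwards [eventually_gt_atTop 0, hbx] with x hx hbx
    refine Eventually.of_forall fun t ↦ ?_
    simp only [F]
    by_cases ht : 1 + t / √x ∈ W
    · have hnonneg := gamowIntegrand_nonneg ν b δ x (by linarith [ht.1] : 0 ≤ 1 + t / √x)
      have hbound := centredIntegrand_le (ν := ν) hb hδ₀ (by linarith) hx hbx ht
      rw [add_sub_cancel_left, mul_div_sqrt_sq hx] at hbound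
      rwa [Set.indicator_of_mem ht, norm_of_nonneg (by positivity), exp_mul_gamowIntegrand]
    · rw [Set.indicator_of_notMem ht, mul_zero, norm_zero]
      positivity
  · exact (integrable_exp_neg_mul_sq (by norm_num)).const_mul _
  · refine Eventually.of_forall fun t ↦
      (tendsto_centredIntegrand (ν := ν) (b := b) hδ₀ hδ₁ t).congr' ?_
    filter_upwards [(tendsto_one_add_div_sqrt_atTop t).eventually
      (Icc_mem_nhds (by norm_num : (1/2 : ℝ) < 1) (by norm_num : (1 : ℝ) < 3/2))] with x hx
    simp only [F]
    rw [Set.indicator_of_mem (show 1 + t / √x ∈ W from hx), exp_mul_gamowIntegrand]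

lemma tendsto_sqrt_mul_exp_mul_integral_gamowIntegrand (hb : 0 ≤ b) (hδ₀ : 0 ≤ δ)
    (hδ₁ : δ < 1/2) :
    Tendsto (fun x ↦ √x * exp (3 * x + b * x ^ δ) * ∫ u in Ioi 0, gamowIntegrand ν b δ x u)
      atTop (𝓝 √(π / (3/4))) := by
  have hW : Ioi 0 ∩ Icc (1/2 : ℝ) (3/2) = Icc (1/2) (3/2) :=
    inter_eq_right.mpr fun u hu ↦ show (0 : ℝ) < u by linarith [hu.1]
  have h := (tendsto_gamowIntegrand_central (ν := ν) hb hδ₀ hδ₁).add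
    (tendsto_gamowIntegrand_tail (ν := ν) hb (by linarith : δ < 1))
  rw [add_zero] at h
  refine h.congr' ?_
  filter_upwards [eventually_ge_atTop 1] with x hx
  rw [← mul_add,
    ← integral_inter_add_sdiff measurableSet_Icc (integrableOn_gamowIntegrand hb hx), hW]

lemma isEquivalent_rpow_mul_integral_gamowIntegrand (hb : 0 ≤ b) (hδ₀ : 0 ≤ δ) (hδ₁ : δ < 1/2) :
    (fun X ↦ X ^ (ν + 1) * ∫ u in Ioi 0, gamowIntegrand ν b δ X u) ~[atTop]
      fun X ↦ √(π / (3/4)) * X ^ (ν + 1/2) * exp (-3 * X - b * X ^ δ) := by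
  have hc : 0 < √(π / (3/4)) := sqrt_pos.mpr (by positivity)
  rw [isEquivalent_iff_tendsto_one ((eventually_gt_atTop 0).mono fun X hX ↦ by positivity)]
  have := (tendsto_sqrt_mul_exp_mul_integral_gamowIntegrand (ν := ν) hb hδ₀ hδ₁).div_const
    √(π / (3/4))
  rw [div_self hc.ne'] at this
  refine this.congr' ?_
  filter_upwards [eventually_gt_atTop 0] with X hX
  rw [Pi.div_apply, show ν + 1 = (ν + 1/2) + 1/2 by ring, rpow_add hX, ← sqrt_eq_rpow,
    show -3 * X - b * X ^ δ = -(3 * X + b * X ^ δ) by ring, exp_neg]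
  have : X ^ (ν + 1/2) ≠ 0 := (rpow_pos_of_pos hX _).ne'
  field_simp

end Laplace

lemma integral_Ioi_eq_rpow_mul_integral_gamowIntegrand (ν b δ : ℝ) {X : ℝ} (hX : 0 < X) :
    ∫ y in Ioi 0, y ^ ν * exp (-y - b * y ^ δ - 2 * X ^ (3/2 : ℝ) * y ^ (-(1:ℝ)/2))
      = X ^ (ν + 1) * ∫ u in Ioi 0, gamowIntegrand ν b δ X u := by
  have h := integral_comp_mul_left_Ioi'
    (fun y ↦ y ^ ν * exp (-y - b * y ^ δ - 2 * X ^ (3/2 : ℝ) * y ^ (-(1:ℝ)/2))) 0 hX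
  rw [mul_zero] at h
  rw [← h, smul_eq_mul, ← integral_const_mul, ← integral_const_mul]
  refine setIntegral_congr_fun measurableSet_Ioi fun u (hu : 0 < u) ↦ ?_
  have hlin : 2 * X ^ (3/2 : ℝ) * (X * u) ^ (-(1:ℝ)/2) = X * (2 / √u) := by
    have hX1 : X ^ (3/2 : ℝ) * X ^ (-(1/2) : ℝ) = X := by rw [← rpow_add hX]; norm_num
    rw [mul_rpow hX.le hu.le, neg_div, rpow_neg hu.le, ← sqrt_eq_rpow]
    linear_combination (2 * (√u)⁻¹) * hX1
  simp only [gamowIntegrand, gamowPhase]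
  rw [mul_rpow hX.le hu.le, mul_rpow hX.le hu.le, hlin, rpow_add_one hX.ne']
  ring_nf

theorem stmt14 (ν b δ : ℝ) (hb : 0 < b) (hδ₀ : 0 < δ) (hδ₁ : δ < 1/2) :
    (fun z : ℝ => ∫ y in Set.Ioi (0:ℝ), y ^ ν * Real.exp (-y - b * y ^ δ - z * y ^ (-(1:ℝ)/2)))
      ~[atTop]
    (fun z : ℝ => 2 * (Real.pi / 3) ^ ((1:ℝ)/2) * (z^2/4) ^ ((2*ν+1)/6) *
        Real.exp (-3 * (z^2/4) ^ ((1:ℝ)/3) - b * (z^2/4) ^ (δ/3))) := by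
  have hX : Tendsto (fun z : ℝ ↦ (z ^ 2 / 4) ^ ((1:ℝ)/3)) atTop atTop :=
    (tendsto_rpow_atTop (by norm_num)).comp
      ((tendsto_pow_atTop two_ne_zero).atTop_div_const (by norm_num))
  have hequiv :=
    (isEquivalent_rpow_mul_integral_gamowIntegrand (ν := ν) hb.le hδ₀.le hδ₁).comp_tendsto hX
  refine (hequiv.congr_left ?_).congr_right ?_
  · filter_upwards [eventually_gt_atTop 0] with z hz
    have hcube : 2 * ((z ^ 2 / 4) ^ ((1:ℝ)/3)) ^ (3/2 : ℝ) = z := by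
      rw [← rpow_mul (by positivity), show (1:ℝ)/3 * (3/2) = 1/2 by norm_num, ← sqrt_eq_rpow,
        show z ^ 2 / 4 = (z / 2) ^ 2 by ring, sqrt_sq (by positivity)]
      ring
    simp only [Function.comp_apply]
    rw [← integral_Ioi_eq_rpow_mul_integral_gamowIntegrand ν b δ (by positivity), hcube]
  · filter_upwards with z
    have hq : 0 ≤ z ^ 2 / 4 := by positivity
    have hπ : √(π / (3/4)) = 2 * (π / 3) ^ ((1:ℝ)/2) := by
      rw [← sqrt_eq_rpow, show π / (3/4) = 2 ^ 2 * (π / 3) by ring, sqrt_mul (by norm_num),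
        sqrt_sq (by norm_num)]
    simp only [Function.comp_apply]
    rw [hπ, ← rpow_mul hq, ← rpow_mul hq]
    ring_nf
end

section
/- Let a > 0, t > 0 and ν > −1, and let s ∈ ℂ satisfy Re(s) > 0. Then the Mellin transform at s of the function z ↦ ∫₀^∞ y^ν e^{−a y − z (y + t)^{−1/2}} dy (defined for z > 0) equals Γ(s) · ∫₀^∞ y^ν (y + t)^{s/2} e^{−a y} dy. -/
/-!
Write the integrand as `w(y) e^{-z c(y)}` with `w(y) = y^ν e^{-a y}` and `c(y) = (y + t)^{-1/2}`.
By Fubini the Mellin transform passes under the `y`-integral, where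
`∫₀^∞ z^{s-1} e^{-c z} dz = c^{-s} Γ(s)` and `c(y)^{-s} = (y + t)^{s/2}`. The same computation at
`Re s` shows absolute convergence of the double integral, since `y^ν (y + t)^{Re s / 2} e^{-a y}` is
dominated by two Gamma integrands.
-/

open MeasureTheory Set

lemma norm_cpow_mul_exp_neg_mul {z : ℝ} (hz : 0 < z) (c : ℝ) (s : ℂ) :
    ‖(z : ℂ) ^ (s - 1) * (Real.exp (-(z * c)) : ℂ)‖ = z ^ (s.re - 1) * Real.exp (-(c * z)) := by
  rw [norm_mul, Complex.norm_cpow_eq_rpow_re_of_pos hz, Complex.norm_real,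
    Real.norm_of_nonneg (Real.exp_pos _).le, Complex.sub_re, Complex.one_re, mul_comm z]

lemma integrableOn_cpow_mul_exp_neg_mul {c : ℝ} (hc : 0 < c) {s : ℂ} (hs : 0 < s.re) :
    IntegrableOn (fun z : ℝ => (z : ℂ) ^ (s - 1) * (Real.exp (-(z * c)) : ℂ)) (Ioi 0) := by
  have hbound : IntegrableOn (fun z : ℝ => z ^ (s.re - 1) * Real.exp (-c * z ^ (1 : ℝ))) (Ioi 0) :=
    integrableOn_rpow_mul_exp_neg_mul_rpow (by linarith) one_pos hc
  refine hbound.mono' (by fun_prop) ?_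
  filter_upwards [ae_restrict_mem measurableSet_Ioi] with z hz
  rw [norm_cpow_mul_exp_neg_mul hz, Real.rpow_one, neg_mul]

lemma mellin_exp_neg_mul {c : ℝ} (hc : 0 < c) {s : ℂ} (hs : 0 < s.re) :
    mellin (fun z : ℝ => (Real.exp (-(z * c)) : ℂ)) s = ((c⁻¹ : ℝ) : ℂ) ^ s * Complex.Gamma s := by
  rw [Complex.ofReal_inv, ← one_div, ← Complex.integral_cpow_mul_exp_neg_mul_Ioi hs hc]
  refine setIntegral_congr_fun measurableSet_Ioi fun z _ => ?_
  push_cast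
  rw [smul_eq_mul, mul_comm (z : ℂ)]

lemma integral_norm_cpow_mul_exp_neg_mul {c : ℝ} (hc : 0 < c) {s : ℂ} (hs : 0 < s.re) :
    ∫ z in Ioi (0 : ℝ), ‖(z : ℂ) ^ (s - 1) * (Real.exp (-(z * c)) : ℂ)‖
      = c⁻¹ ^ s.re * Real.Gamma s.re := by
  rw [← one_div, ← Real.integral_rpow_mul_exp_neg_mul_Ioi hs hc]
  exact setIntegral_congr_fun measurableSet_Ioi fun z hz => norm_cpow_mul_exp_neg_mul hz c s

section

variable {α : Type*} [MeasurableSpace α] {μ : Measure α} [SFinite μ] {w c : α → ℝ} {s : ℂ}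

lemma integrable_mellin_kernel_mul_exp_neg_mul (hw : Measurable w) (hc : Measurable c)
    (hc_pos : ∀ᵐ y ∂μ, 0 < c y) (hs : 0 < s.re)
    (hint : Integrable (fun y => w y * (c y)⁻¹ ^ s.re) μ) :
    Integrable (Function.uncurry fun (z : ℝ) (y : α) =>
        (z : ℂ) ^ (s - 1) * ((w y * Real.exp (-(z * c y)) : ℝ) : ℂ))
      ((volume.restrict (Ioi 0)).prod μ) := by
  have hsplit : ∀ (z : ℝ) (y : α), (z : ℂ) ^ (s - 1) * ((w y * Real.exp (-(z * c y)) : ℝ) : ℂ)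
      = (w y : ℂ) * ((z : ℂ) ^ (s - 1) * (Real.exp (-(z * c y)) : ℂ)) := by
    intro z y; push_cast; ring
  rw [integrable_prod_iff' (by fun_prop)]
  constructor
  · filter_upwards [hc_pos] with y hy
    simp only [Function.uncurry_apply_pair, hsplit]
    exact (integrableOn_cpow_mul_exp_neg_mul hy hs).const_mul _
  · refine (hint.norm.mul_const (Real.Gamma s.re)).congr ?_
    filter_upwards [hc_pos] with y hy
    simp only [Function.uncurry_apply_pair, hsplit, norm_mul (w y : ℂ), integral_const_mul,
      integral_norm_cpow_mul_exp_neg_mul hy hs, Complex.norm_real, norm_mul (w y),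
      Real.norm_of_nonneg (Real.rpow_nonneg (inv_nonneg.2 hy.le) _)]
    ring

theorem mellin_integral_mul_exp_neg_mul_s16 (hw : Measurable w) (hc : Measurable c)
    (hc_pos : ∀ᵐ y ∂μ, 0 < c y) (hs : 0 < s.re)
    (hint : Integrable (fun y => w y * (c y)⁻¹ ^ s.re) μ) :
    mellin (fun z : ℝ => ((∫ y, w y * Real.exp (-(z * c y)) ∂μ : ℝ) : ℂ)) s
      = Complex.Gamma s * ∫ y, (w y : ℂ) * ((c y)⁻¹ : ℝ) ^ s ∂μ := by
  calc mellin (fun z : ℝ => ((∫ y, w y * Real.exp (-(z * c y)) ∂μ : ℝ) : ℂ)) s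
      = ∫ z in Ioi (0 : ℝ),
          ∫ y, (z : ℂ) ^ (s - 1) * ((w y * Real.exp (-(z * c y)) : ℝ) : ℂ) ∂μ := by
        simp only [mellin, smul_eq_mul, ← integral_complex_ofReal, integral_const_mul]
    _ = ∫ y, (∫ z in Ioi (0 : ℝ), (z : ℂ) ^ (s - 1) * ((w y * Real.exp (-(z * c y)) : ℝ) : ℂ)) ∂μ :=
        integral_integral_swap (integrable_mellin_kernel_mul_exp_neg_mul hw hc hc_pos hs hint)
    _ = ∫ y, Complex.Gamma s * ((w y : ℂ) * ((c y)⁻¹ : ℝ) ^ s) ∂μ := by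
        refine integral_congr_ae ?_
        filter_upwards [hc_pos] with y hy
        have := mellin_exp_neg_mul hy hs
        simp only [mellin, smul_eq_mul] at this
        simp only [Complex.ofReal_mul, mul_left_comm _ (w y : ℂ), integral_const_mul, this]
        ring
    _ = Complex.Gamma s * ∫ y, (w y : ℂ) * ((c y)⁻¹ : ℝ) ^ s ∂μ := integral_const_mul _ _

end

lemma Real.add_rpow_le_two_rpow_mul_rpow_add_rpow {x y p : ℝ} (hx : 0 ≤ x) (hy : 0 ≤ y)
    (hp : 0 ≤ p) : (x + y) ^ p ≤ 2 ^ p * (x ^ p + y ^ p) := calc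
  (x + y) ^ p ≤ (2 * max x y) ^ p := by rw [two_mul]; gcongr <;> simp
  _ = 2 ^ p * (max x y) ^ p := Real.mul_rpow zero_le_two (le_max_of_le_left hx)
  _ ≤ 2 ^ p * (x ^ p + y ^ p) := by
    gcongr
    rcases le_total x y with h | h
    · rw [max_eq_right h]; linarith [Real.rpow_nonneg hx p]
    · rw [max_eq_left h]; linarith [Real.rpow_nonneg hy p]

lemma integrableOn_rpow_mul_exp_neg_mul_mul_add_rpow {a t ν q : ℝ} (ha : 0 < a) (ht : 0 ≤ t)
    (hν : -1 < ν) (hq : 0 ≤ q) :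
    IntegrableOn (fun y : ℝ => y ^ ν * Real.exp (-a * y) * (y + t) ^ q) (Ioi 0) := by
  have hgamma : ∀ {r : ℝ}, -1 < r →
      IntegrableOn (fun y : ℝ => y ^ r * Real.exp (-a * y)) (Ioi 0) := fun hr => by
    simpa only [Real.rpow_one] using integrableOn_rpow_mul_exp_neg_mul_rpow hr one_pos ha
  have hbound := ((hgamma (r := q + ν) (by linarith)).const_mul (2 ^ q)).add
    ((hgamma hν).const_mul (2 ^ q * t ^ q))
  refine hbound.mono' (by fun_prop) ?_
  filter_upwards [ae_restrict_mem measurableSet_Ioi] with y (hy : 0 < y)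
  rw [Pi.add_apply, Real.norm_of_nonneg (by positivity), Real.rpow_add hy]
  calc y ^ ν * Real.exp (-a * y) * (y + t) ^ q
      ≤ y ^ ν * Real.exp (-a * y) * (2 ^ q * (y ^ q + t ^ q)) := by
        gcongr; exact Real.add_rpow_le_two_rpow_mul_rpow_add_rpow hy.le ht hq
    _ = _ := by ring

theorem stmt16 (a t ν : ℝ) (ha : 0 < a) (ht : 0 < t) (hν : -1 < ν) (s : ℂ)
    (hs : 0 < s.re) :
    mellin (fun z : ℝ =>
        ((∫ y in Set.Ioi (0:ℝ), y ^ ν * Real.exp (-a * y - z * (y + t) ^ (-(1:ℝ)/2)) : ℝ) : ℂ)) s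
      = Complex.Gamma s *
          ∫ y in Set.Ioi (0:ℝ),
            ((y ^ ν : ℝ) : ℂ) * ((y + t : ℝ) : ℂ) ^ (s / 2) * (Real.exp (-a * y) : ℂ) := by
  have hpos : ∀ y ∈ Ioi (0 : ℝ), 0 < y + t := fun y (hy : 0 < y) => by linarith
  have hinv : ∀ y ∈ Ioi (0 : ℝ), ((y + t) ^ (-(1 : ℝ) / 2))⁻¹ = (y + t) ^ ((1 : ℝ) / 2) :=
    fun y hy => by rw [neg_div, Real.rpow_neg (hpos y hy).le, inv_inv]
  have hexp : ∀ z y : ℝ, y ^ ν * Real.exp (-a * y - z * (y + t) ^ (-(1 : ℝ) / 2))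
      = y ^ ν * Real.exp (-a * y) * Real.exp (-(z * (y + t) ^ (-(1 : ℝ) / 2))) := fun z y => by
    rw [sub_eq_add_neg, Real.exp_add, mul_assoc]
  have hint : IntegrableOn (fun y : ℝ => y ^ ν * Real.exp (-a * y)
      * ((y + t) ^ (-(1 : ℝ) / 2))⁻¹ ^ s.re) (Ioi 0) := by
    refine (integrableOn_rpow_mul_exp_neg_mul_mul_add_rpow ha ht.le hν
      (by positivity : 0 ≤ 1 / 2 * s.re)).congr_fun (fun y hy => ?_) measurableSet_Ioi
    rw [hinv y hy, ← Real.rpow_mul (hpos y hy).le]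
  simp_rw [hexp]
  rw [mellin_integral_mul_exp_neg_mul_s16 (by fun_prop) (by fun_prop)
    ((ae_restrict_mem measurableSet_Ioi).mono fun y hy => Real.rpow_pos_of_pos (hpos y hy) _)
    hs hint]
  congr 1
  refine setIntegral_congr_fun measurableSet_Ioi fun y hy => ?_
  rw [hinv y hy, ← Complex.cpow_mul_ofReal_nonneg (hpos y hy).le,
    show (((1 : ℝ) / 2 : ℝ) : ℂ) * s = s / 2 by push_cast; ring]
  push_cast
  ring
end

section
/- Let b > 0, δ > 0 and ν be real, and let s ∈ ℂ satisfy Re(s) > 0 and ν + Re(s)/2 > −1. Then the Mellin transform at s of the function z ↦ ∫₀^∞ y^ν e^{−y − b y^δ − z y^{−1/2}} dy (defined for z > 0) equals Γ(s) · ∫₀^∞ y^{ν + s/2} e^{−y − b y^δ} dy. -/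
/-!
Swap the two integrals. For fixed `y` the `z`-integral is a Gamma integral,
`∫₀^∞ z^{s-1} e^{-c z} dz = Γ(s) c^{-s}`, and with `c = y^{-1/2}` this produces the factor
`y^{s/2}`. The swap is justified by Fubini: the same computation applied to absolute values
turns the absolute double integral into `Γ(Re s) ∫₀^∞ y^{ν + Re s/2} e^{-y - b y^δ} dy`, which is
finite because `ν + Re s/2 > -1` and `e^{-b y^δ} ≤ 1`.
-/

open MeasureTheory Set
open scoped Real Complex

lemma integrableOn_rpow_mul_exp_neg_mul_Ioi {a r : ℝ} (ha : -1 < a) (hr : 0 < r) :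
    IntegrableOn (fun t : ℝ => t ^ a * rexp (-(r * t))) (Ioi 0) := by
  simpa [Real.rpow_one, neg_mul] using integrableOn_rpow_mul_exp_neg_mul_rpow ha one_pos hr

section LaplaceKernel

variable {s : ℂ} {r : ℝ}

lemma norm_cpow_sub_one_mul_cexp_neg_mul {z : ℝ} (hz : 0 < z) :
    ‖(z : ℂ) ^ (s - 1) * cexp (-(r * z))‖ = z ^ (s.re - 1) * rexp (-(r * z)) := by
  rw [norm_mul, Complex.norm_cpow_eq_rpow_re_of_pos hz, Complex.norm_exp]
  norm_cast

lemma integrableOn_cpow_sub_one_mul_cexp_neg_mul_Ioi (hs : 0 < s.re) (hr : 0 < r) :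
    IntegrableOn (fun z : ℝ => (z : ℂ) ^ (s - 1) * cexp (-(r * z))) (Ioi 0) := by
  refine (integrableOn_rpow_mul_exp_neg_mul_Ioi (a := s.re - 1) (by linarith) hr).mono' ?_ ?_
  · refine ContinuousOn.aestronglyMeasurable (fun z hz => ?_) measurableSet_Ioi
    exact ((continuousAt_cpow_const (Complex.ofReal_mem_slitPlane.2 hz)).comp
      Complex.continuous_ofReal.continuousAt |>.mul (by fun_prop)).continuousWithinAt
  · filter_upwards [ae_restrict_mem measurableSet_Ioi] with z hz
    exact (norm_cpow_sub_one_mul_cexp_neg_mul hz).le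

lemma integral_norm_cpow_sub_one_mul_cexp_neg_mul_Ioi (hs : 0 < s.re) (hr : 0 < r) :
    ∫ z in Ioi (0 : ℝ), ‖(z : ℂ) ^ (s - 1) * cexp (-(r * z))‖ =
      ‖(r : ℂ) ^ (-s)‖ * Real.Gamma s.re := by
  rw [setIntegral_congr_fun measurableSet_Ioi fun z hz => norm_cpow_sub_one_mul_cexp_neg_mul hz,
    Real.integral_rpow_mul_exp_neg_mul_Ioi hs hr, Complex.norm_cpow_eq_rpow_re_of_pos hr,
    Complex.neg_re, Real.rpow_neg hr.le, one_div, Real.inv_rpow hr.le]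

lemma integral_cpow_sub_one_mul_cexp_neg_mul_Ioi (hs : 0 < s.re) (hr : 0 < r) :
    ∫ z in Ioi (0 : ℝ), (z : ℂ) ^ (s - 1) * cexp (-(r * z)) = (r : ℂ) ^ (-s) * Complex.Gamma s := by
  rw [Complex.integral_cpow_mul_exp_neg_mul_Ioi hs hr, one_div, Complex.cpow_neg,
    Complex.inv_cpow _ _ (by simp [Complex.arg_ofReal_of_nonneg hr.le, Real.pi_ne_zero.symm])]

end LaplaceKernel

section MellinLaplace

variable {α : Type*} [MeasurableSpace α] {μ : Measure α} [SFinite μ] {g : α → ℂ} {c : α → ℝ}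
  {s : ℂ}

lemma integrable_cpow_sub_one_mul_cexp_neg_mul_prod (hs : 0 < s.re)
    (hg : AEStronglyMeasurable g μ) (hcm : AEMeasurable c μ) (hc : ∀ᵐ y ∂μ, 0 < c y)
    (hint : Integrable (fun y => (c y : ℂ) ^ (-s) * g y) μ) :
    Integrable (fun p : ℝ × α => g p.2 * ((p.1 : ℂ) ^ (s - 1) * cexp (-(c p.2 * p.1))))
      ((volume.restrict (Ioi 0)).prod μ) := by
  have hmeas : AEStronglyMeasurable
      (fun p : ℝ × α => g p.2 * ((p.1 : ℂ) ^ (s - 1) * cexp (-(c p.2 * p.1))))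
      ((volume.restrict (Ioi 0)).prod μ) := by
    refine hg.comp_snd.mul (AEMeasurable.aestronglyMeasurable ?_)
    have := hcm.comp_snd (μ := volume.restrict (Ioi (0:ℝ)))
    fun_prop
  rw [integrable_prod_iff' hmeas]
  constructor
  · filter_upwards [hc] with y hy
    exact (integrableOn_cpow_sub_one_mul_cexp_neg_mul_Ioi hs hy).const_mul (g y)
  · refine (hint.norm.const_mul (Real.Gamma s.re)).congr ?_
    filter_upwards [hc] with y hy
    simp_rw [norm_mul (g y)]
    rw [integral_const_mul, integral_norm_cpow_sub_one_mul_cexp_neg_mul_Ioi hs hy, norm_mul]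
    ring

theorem mellin_integral_mul_cexp_neg_mul (hs : 0 < s.re)
    (hg : AEStronglyMeasurable g μ) (hcm : AEMeasurable c μ) (hc : ∀ᵐ y ∂μ, 0 < c y)
    (hint : Integrable (fun y => (c y : ℂ) ^ (-s) * g y) μ) :
    mellin (fun z : ℝ => ∫ y, g y * cexp (-(c y * z)) ∂μ) s =
      Complex.Gamma s * ∫ y, (c y : ℂ) ^ (-s) * g y ∂μ := by
  calc mellin (fun z : ℝ => ∫ y, g y * cexp (-(c y * z)) ∂μ) s
      = ∫ z in Ioi (0 : ℝ), ∫ y, g y * ((z : ℂ) ^ (s - 1) * cexp (-(c y * z))) ∂μ := by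
        refine setIntegral_congr_fun measurableSet_Ioi fun z _ => ?_
        simp only [smul_eq_mul, ← integral_const_mul]
        congr 1 with y
        ring
    _ = ∫ y, (∫ z in Ioi (0 : ℝ), g y * ((z : ℂ) ^ (s - 1) * cexp (-(c y * z)))) ∂μ :=
        integral_integral_swap (integrable_cpow_sub_one_mul_cexp_neg_mul_prod hs hg hcm hc hint)
    _ = ∫ y, Complex.Gamma s * ((c y : ℂ) ^ (-s) * g y) ∂μ := by
        refine integral_congr_ae ?_
        filter_upwards [hc] with y hy
        rw [integral_const_mul, integral_cpow_sub_one_mul_cexp_neg_mul_Ioi hs hy]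
        ring
    _ = _ := integral_const_mul _ _

end MellinLaplace

lemma integrableOn_cpow_mul_exp_neg_sub_mul_rpow {w : ℂ} {b δ : ℝ} (hw : -1 < w.re) (hb : 0 ≤ b) :
    IntegrableOn (fun y : ℝ => (y : ℂ) ^ w * (rexp (-y - b * y ^ δ) : ℂ)) (Ioi 0) := by
  refine (integrableOn_rpow_mul_exp_neg_mul_Ioi hw one_pos).mono' (by fun_prop) ?_
  filter_upwards [ae_restrict_mem measurableSet_Ioi] with y (hy : 0 < y)
  rw [norm_mul, Complex.norm_cpow_eq_rpow_re_of_pos hy, Complex.norm_real, Real.norm_of_nonneg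
    (Real.exp_pos _).le]
  have : 0 ≤ b * y ^ δ := by positivity
  gcongr
  linarith

theorem stmt17_general (b δ ν : ℝ) (hb : 0 < b) (s : ℂ)
    (hs : 0 < s.re) (hνs : -1 < ν + s.re / 2) :
    mellin (fun z : ℝ =>
        ((∫ y in Set.Ioi (0:ℝ), y ^ ν * Real.exp (-y - b * y ^ δ - z * y ^ (-(1:ℝ)/2)) : ℝ) : ℂ)) s
      = Complex.Gamma s *
          ∫ y in Set.Ioi (0:ℝ),
            (y : ℂ) ^ ((ν : ℂ) + s / 2) * (Real.exp (-y - b * y ^ δ) : ℂ) := by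
  set g : ℝ → ℂ := fun y => ((y ^ ν * rexp (-y - b * y ^ δ) : ℝ) : ℂ)
  have hkernel : (fun z : ℝ =>
      ((∫ y in Ioi (0:ℝ), y ^ ν * rexp (-y - b * y ^ δ - z * y ^ (-(1:ℝ)/2)) : ℝ) : ℂ)) =
      fun z : ℝ => ∫ y in Ioi (0:ℝ), g y * cexp (-(((y ^ (-(1:ℝ)/2) : ℝ) : ℂ) * z)) := by
    funext z
    rw [← integral_complex_ofReal]
    congr 1 with y
    dsimp only [g]
    rw [sub_eq_add_neg _ (z * _), Real.exp_add]
    push_cast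
    ring_nf
  have hpow : EqOn (fun y : ℝ => ((y ^ (-(1:ℝ)/2) : ℝ) : ℂ) ^ (-s) * g y)
      (fun y : ℝ => (y : ℂ) ^ ((ν : ℂ) + s / 2) * (rexp (-y - b * y ^ δ) : ℂ)) (Ioi 0) := by
    intro y (hy : 0 < y)
    dsimp only [g]
    rw [← Complex.cpow_mul_ofReal_nonneg hy.le, Complex.cpow_add _ _ (by exact_mod_cast hy.ne'),
      Complex.ofReal_mul, Complex.ofReal_cpow hy.le]
    push_cast
    ring_nf
  have hint := (integrableOn_cpow_mul_exp_neg_sub_mul_rpow (w := (ν : ℂ) + s / 2) (δ := δ)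
    (by simpa using hνs) hb.le).congr_fun hpow.symm measurableSet_Ioi
  rw [hkernel, mellin_integral_mul_cexp_neg_mul hs (by fun_prop) (by fun_prop)
    (ae_restrict_of_forall_mem measurableSet_Ioi fun y hy => Real.rpow_pos_of_pos hy _) hint,
    setIntegral_congr_fun measurableSet_Ioi hpow]

theorem stmt17 (b δ ν : ℝ) (hb : 0 < b) (hδ : 0 < δ) (s : ℂ)
    (hs : 0 < s.re) (hνs : -1 < ν + s.re / 2) :
    mellin (fun z : ℝ =>
        ((∫ y in Set.Ioi (0:ℝ), y ^ ν * Real.exp (-y - b * y ^ δ - z * y ^ (-(1:ℝ)/2)) : ℝ) : ℂ)) s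
      = Complex.Gamma s *
          ∫ y in Set.Ioi (0:ℝ),
            (y : ℂ) ^ ((ν : ℂ) + s / 2) * (Real.exp (-y - b * y ^ δ) : ℂ) :=
  stmt17_general b δ ν hb s hs hνs
end
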